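/- arXiv:math/0606506 — 3 statements merged into one kernel-verified Lean document; each statement's English description precedes it below -/
import Mathlib

section
/- For each α ∈ {1,−1}, 1 ≤ r ≤ p₊ and 1 ≤ r' ≤ p₋, the displayed operators define a g_{p₊,p₋}-module structure on X^α_{r,r'} (i.e. the operators satisfy all defining relations of g_{p₊,p₋}), and the resulting module, of ℂ-dimension r·r', is simple (it has no submodules other than 0 and itself). -/
noncomputable section

/-- Generators of the quantum group `g_{p₊,p₋}`. -/
inductive QGGen : Type
  | Ep | Fp | Em | Fm | K

open FreeAlgebra QGGen

/-- `q = exp(iπ/p)`. -/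
def rootOfUnity (p : ℕ) : ℂ := Complex.exp (Real.pi * Complex.I / p)

/-- The defining relations of the quantum group `g_{p₊,p₋}`. -/
inductive QGRel (pp pm : ℕ) : FreeAlgebra ℂ QGGen → FreeAlgebra ℂ QGGen → Prop
  | EpNil : QGRel pp pm (ι ℂ Ep ^ pp) 0
  | FpNil : QGRel pp pm (ι ℂ Fp ^ pp) 0
  | EmNil : QGRel pp pm (ι ℂ Em ^ pm) 0
  | FmNil : QGRel pp pm (ι ℂ Fm ^ pm) 0
  | KOrd : QGRel pp pm (ι ℂ K ^ (2 * pp * pm)) 1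
  | KEp : QGRel pp pm (ι ℂ K * ι ℂ Ep)
      (algebraMap ℂ (FreeAlgebra ℂ QGGen) ((rootOfUnity pp) ^ 2) * (ι ℂ Ep * ι ℂ K))
  | KFp : QGRel pp pm (ι ℂ K * ι ℂ Fp)
      (algebraMap ℂ (FreeAlgebra ℂ QGGen) (((rootOfUnity pp) ^ 2)⁻¹) * (ι ℂ Fp * ι ℂ K))
  | KEm : QGRel pp pm (ι ℂ K * ι ℂ Em)
      (algebraMap ℂ (FreeAlgebra ℂ QGGen) ((rootOfUnity pm) ^ 2) * (ι ℂ Em * ι ℂ K))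
  | KFm : QGRel pp pm (ι ℂ K * ι ℂ Fm)
      (algebraMap ℂ (FreeAlgebra ℂ QGGen) (((rootOfUnity pm) ^ 2)⁻¹) * (ι ℂ Fm * ι ℂ K))
  | EpEm : QGRel pp pm (ι ℂ Ep * ι ℂ Em) (ι ℂ Em * ι ℂ Ep)
  | FpFm : QGRel pp pm (ι ℂ Fp * ι ℂ Fm) (ι ℂ Fm * ι ℂ Fp)
  | EpFm : QGRel pp pm (ι ℂ Ep * ι ℂ Fm) (ι ℂ Fm * ι ℂ Ep)
  | EmFp : QGRel pp pm (ι ℂ Em * ι ℂ Fp) (ι ℂ Fp * ι ℂ Em)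
  | EpFp : QGRel pp pm (ι ℂ Ep * ι ℂ Fp - ι ℂ Fp * ι ℂ Ep)
      (algebraMap ℂ (FreeAlgebra ℂ QGGen)
          (((rootOfUnity pp) ^ pm - ((rootOfUnity pp) ^ pm)⁻¹)⁻¹) *
        (ι ℂ K ^ pm - ι ℂ K ^ (2 * pp * pm - pm)))
  | EmFm : QGRel pp pm (ι ℂ Em * ι ℂ Fm - ι ℂ Fm * ι ℂ Em)
      (algebraMap ℂ (FreeAlgebra ℂ QGGen)
          (((rootOfUnity pm) ^ pp - ((rootOfUnity pm) ^ pp)⁻¹)⁻¹) *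
        (ι ℂ K ^ pp - ι ℂ K ^ (2 * pp * pm - pp)))

/-- The quantum group `g_{p₊,p₋}`. -/
abbrev QG (pp pm : ℕ) : Type := RingQuot (QGRel pp pm)

/-- The image of a generator in `g_{p₊,p₋}`. -/
def gen (pp pm : ℕ) (x : QGGen) : QG pp pm :=
  RingQuot.mkAlgHom ℂ (QGRel pp pm) (ι ℂ x)

/-- The quantum integer `[m]₊`. -/
def qintP (pp pm : ℕ) (m : ℤ) : ℂ :=
  (rootOfUnity pp ^ ((pm : ℤ) * m) - rootOfUnity pp ^ (-((pm : ℤ) * m))) /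
    (rootOfUnity pp ^ (pm : ℤ) - rootOfUnity pp ^ (-(pm : ℤ)))

/-- The quantum integer `[m]₋`. -/
def qintM (pp pm : ℕ) (m : ℤ) : ℂ :=
  (rootOfUnity pm ^ ((pp : ℤ) * m) - rootOfUnity pm ^ (-((pp : ℤ) * m))) /
    (rootOfUnity pm ^ (pp : ℤ) - rootOfUnity pm ^ (-(pp : ℤ)))

/-- The underlying vector space of the module `X^α_{r,r'}`, with basis `a_{n,n'}`. -/
abbrev Vrep (r r' : ℕ) : Type := Fin r × Fin r' → ℂ

/-- The action of `K` on `X^α_{r,r'}`. -/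
def Kop (pp pm : ℕ) (α : ℂ) (r r' : ℕ) : Vrep r r' →ₗ[ℂ] Vrep r r' where
  toFun v := fun nn =>
    α * rootOfUnity pp ^ ((r : ℤ) - 1 - 2 * (nn.1 : ℕ)) *
      rootOfUnity pm ^ ((r' : ℤ) - 1 - 2 * (nn.2 : ℕ)) * v nn
  map_add' x y := by funext nn; simp [mul_add]
  map_smul' c x := by funext nn; simp [Pi.smul_apply, smul_eq_mul]; ring

/-- The action of `E₊` on `X^α_{r,r'}` : `E₊·a_{n,n'} = α^{p₋}(−1)^{r'−1}[n]₊[r−n]₊ a_{n−1,n'}`. -/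
def EopP (pp pm : ℕ) (α : ℂ) (r r' : ℕ) : Vrep r r' →ₗ[ℂ] Vrep r r' where
  toFun v := fun nn =>
    α ^ pm * (-1 : ℂ) ^ (r' - 1) *
      (if h : (nn.1 : ℕ) + 1 < r then
        qintP pp pm ((nn.1 : ℕ) + 1) * qintP pp pm ((r : ℤ) - ((nn.1 : ℕ) + 1)) *
          v (⟨(nn.1 : ℕ) + 1, h⟩, nn.2)
      else 0)
  map_add' x y := by
    funext nn
    simp only [Pi.add_apply]
    split_ifs with h <;> ring
  map_smul' c x := by
    funext nn
    simp only [Pi.smul_apply, smul_eq_mul, RingHom.id_apply]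
    split_ifs with h <;> ring

/-- The action of `E₋` on `X^α_{r,r'}` : `E₋·a_{n,n'} = α^{p₊}(−1)^{r−1}[n']₋[r'−n']₋ a_{n,n'−1}`. -/
def EopM (pp pm : ℕ) (α : ℂ) (r r' : ℕ) : Vrep r r' →ₗ[ℂ] Vrep r r' where
  toFun v := fun nn =>
    α ^ pp * (-1 : ℂ) ^ (r - 1) *
      (if h : (nn.2 : ℕ) + 1 < r' then
        qintM pp pm ((nn.2 : ℕ) + 1) * qintM pp pm ((r' : ℤ) - ((nn.2 : ℕ) + 1)) *
          v (nn.1, ⟨(nn.2 : ℕ) + 1, h⟩)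
      else 0)
  map_add' x y := by
    funext nn
    simp only [Pi.add_apply]
    split_ifs with h <;> ring
  map_smul' c x := by
    funext nn
    simp only [Pi.smul_apply, smul_eq_mul, RingHom.id_apply]
    split_ifs with h <;> ring

/-- The action of `F₊` on `X^α_{r,r'}` : `F₊·a_{n,n'} = a_{n+1,n'}`. -/
def FopP (r r' : ℕ) : Vrep r r' →ₗ[ℂ] Vrep r r' where
  toFun v := fun nn =>
    if 0 < (nn.1 : ℕ) then
      v (⟨(nn.1 : ℕ) - 1, Nat.lt_of_le_of_lt (Nat.sub_le _ 1) nn.1.isLt⟩, nn.2)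
    else 0
  map_add' x y := by
    funext nn
    simp only [Pi.add_apply]
    split_ifs with h <;> ring
  map_smul' c x := by
    funext nn
    simp only [Pi.smul_apply, smul_eq_mul, RingHom.id_apply]
    split_ifs with h <;> ring

/-- The action of `F₋` on `X^α_{r,r'}` : `F₋·a_{n,n'} = a_{n,n'+1}`. -/
def FopM (r r' : ℕ) : Vrep r r' →ₗ[ℂ] Vrep r r' where
  toFun v := fun nn =>
    if 0 < (nn.2 : ℕ) then
      v (nn.1, ⟨(nn.2 : ℕ) - 1, Nat.lt_of_le_of_lt (Nat.sub_le _ 1) nn.2.isLt⟩)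
    else 0
  map_add' x y := by
    funext nn
    simp only [Pi.add_apply]
    split_ifs with h <;> ring
  map_smul' c x := by
    funext nn
    simp only [Pi.smul_apply, smul_eq_mul, RingHom.id_apply]
    split_ifs with h <;> ring

/-- `ρ` is the standard representation of `g_{p₊,p₋}` on `X^α_{r,r'}`. -/
def IsStdRep (pp pm : ℕ) (α : ℂ) (r r' : ℕ)
    (ρ : QG pp pm →ₐ[ℂ] Module.End ℂ (Vrep r r')) : Prop :=
  ρ (gen pp pm K) = Kop pp pm α r r' ∧
  ρ (gen pp pm Ep) = EopP pp pm α r r' ∧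
  ρ (gen pp pm Em) = EopM pp pm α r r' ∧
  ρ (gen pp pm Fp) = FopP r r' ∧
  ρ (gen pp pm Fm) = FopM r r'


/-! ### Auxiliary lemmas -/

lemma root_ne_zero (p : ℕ) : rootOfUnity p ≠ 0 := Complex.exp_ne_zero _

lemma root_zpow (p : ℕ) (m : ℤ) :
    rootOfUnity p ^ m = Complex.exp (m * (Real.pi * Complex.I / p)) := by
  rw [rootOfUnity, ← Complex.exp_int_mul]

lemma pi_I_ne_zero : (Real.pi : ℂ) * Complex.I ≠ 0 := by
  simp [Real.pi_ne_zero, Complex.I_ne_zero]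

lemma root_zpow_eq_one_iff (p : ℕ) (hp : 0 < p) (m : ℤ) :
    rootOfUnity p ^ m = 1 ↔ (2 * (p : ℤ)) ∣ m := by
  rw [root_zpow, Complex.exp_eq_one_iff]
  have hp' : (p : ℂ) ≠ 0 := Nat.cast_ne_zero.mpr hp.ne'
  constructor
  · rintro ⟨n, hn⟩
    refine ⟨n, ?_⟩
    field_simp at hn
    have h2 : (m : ℂ) * (Real.pi * Complex.I) = (2 * p * n) * (Real.pi * Complex.I) := by
      rw [hn]; ring
    have h3 : (m : ℂ) = 2 * p * n := mul_right_cancel₀ pi_I_ne_zero h2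
    exact_mod_cast h3
  · rintro ⟨n, rfl⟩
    refine ⟨n, ?_⟩
    push_cast
    field_simp

lemma root_pow_self (p : ℕ) (hp : 0 < p) : rootOfUnity p ^ (p : ℤ) = -1 := by
  rw [root_zpow]
  have hp' : (p : ℂ) ≠ 0 := Nat.cast_ne_zero.mpr hp.ne'
  rw [show ((p : ℤ) : ℂ) * (Real.pi * Complex.I / p) = Real.pi * Complex.I by
    push_cast; field_simp]
  exact Complex.exp_pi_mul_I

lemma root_mul_root (pp pm : ℕ) (hpp : 0 < pp) (hpm : 0 < pm) (a b : ℤ) :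
    rootOfUnity pp ^ a * rootOfUnity pm ^ b
      = rootOfUnity (pp * pm) ^ (a * pm + b * pp) := by
  rw [root_zpow, root_zpow, root_zpow, ← Complex.exp_add]
  congr 1
  have h1 : (pp : ℂ) ≠ 0 := Nat.cast_ne_zero.mpr hpp.ne'
  have h2 : (pm : ℂ) ≠ 0 := Nat.cast_ne_zero.mpr hpm.ne'
  push_cast
  field_simp

lemma root_sub_ne_zero (p : ℕ) (hp : 0 < p) (k : ℤ) (h : ¬ (2 * (p:ℤ)) ∣ 2 * k) :
    rootOfUnity p ^ k - rootOfUnity p ^ (-k) ≠ 0 := by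
  intro h0
  apply h
  rw [← root_zpow_eq_one_iff p hp]
  have he : rootOfUnity p ^ k = rootOfUnity p ^ (-k) := sub_eq_zero.mp h0
  rw [show 2 * k = k - (-k) by ring, zpow_sub₀ (root_ne_zero p), he,
    div_self (zpow_ne_zero _ (root_ne_zero p))]

lemma root_split (p : ℕ) (Y : ℤ) (X Z : ℤ) (h : X = Y + Z) :
    rootOfUnity p ^ X = rootOfUnity p ^ Y * rootOfUnity p ^ Z := by
  subst h; exact zpow_add₀ (root_ne_zero p) _ _

section QInt

variable (pp pm : ℕ)

lemma not_dvd_pm (hpp : 2 ≤ pp) (hco : Nat.Coprime pp pm) : ¬ (pp : ℤ) ∣ (pm : ℤ) := by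
  intro h
  have h' : pp ∣ pm := Int.ofNat_dvd.mp h
  have h2 : pp ∣ Nat.gcd pp pm := Nat.dvd_gcd dvd_rfl h'
  rw [hco] at h2
  have h3 := Nat.dvd_one.mp h2
  omega

lemma qden_ne_zero (hpp : 2 ≤ pp) (hco : Nat.Coprime pp pm) :
    rootOfUnity pp ^ (pm : ℤ) - rootOfUnity pp ^ (-(pm : ℤ)) ≠ 0 := by
  apply root_sub_ne_zero pp (by omega)
  intro h
  have : (pp:ℤ) ∣ (pm:ℤ) := (mul_dvd_mul_iff_left (by norm_num : (2:ℤ) ≠ 0)).mp h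
  exact not_dvd_pm pp pm hpp hco this

lemma qintP_ne_zero (hpp : 2 ≤ pp) (hco : Nat.Coprime pp pm) (n : ℤ)
    (hn : ¬ (pp : ℤ) ∣ n) : qintP pp pm n ≠ 0 := by
  apply div_ne_zero _ (qden_ne_zero pp pm hpp hco)
  apply root_sub_ne_zero pp (by omega)
  intro hh
  have hdvd : (pp : ℤ) ∣ (pm : ℤ) * n :=
    (mul_dvd_mul_iff_left (by norm_num : (2:ℤ) ≠ 0)).mp (by
      rw [← mul_assoc] at hh ⊢; exact hh)
  have hcop : IsCoprime (pp : ℤ) (pm : ℤ) := Int.isCoprime_iff_gcd_eq_one.mpr hco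
  exact hn (hcop.dvd_of_dvd_mul_left hdvd)

lemma qintP_zero : qintP pp pm 0 = 0 := by simp [qintP]

lemma qint_identity (hpp : 2 ≤ pp) (hco : Nat.Coprime pp pm) (a b : ℤ) :
    qintP pp pm a * qintP pp pm b - qintP pp pm (a - 1) * qintP pp pm (b + 1)
      = qintP pp pm (b + 1 - a) := by
  set u := rootOfUnity pp ^ (pm : ℤ) with hu
  have hu0 : u ≠ 0 := zpow_ne_zero _ (root_ne_zero pp)
  have hd : u - u⁻¹ ≠ 0 := by
    rw [hu, ← zpow_neg]; exact qden_ne_zero pp pm hpp hco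
  have hnum : ∀ m : ℤ, qintP pp pm m = (u ^ m - u ^ (-m)) / (u - u⁻¹) := by
    intro m
    rw [qintP, zpow_mul, show -(((pm:ℕ):ℤ) * m) = ((pm:ℕ):ℤ) * (-m) by ring, zpow_mul,
      zpow_neg _ ((pm:ℕ):ℤ), ← hu]
  have key : (u ^ a - u ^ (-a)) * (u ^ b - u ^ (-b))
      - (u ^ (a-1) - u ^ (-(a-1))) * (u ^ (b+1) - u ^ (-(b+1)))
      = (u ^ (b+1-a) - u ^ (-(b+1-a))) * (u - u⁻¹) := by
    have hA0 : u ^ a ≠ 0 := zpow_ne_zero _ hu0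
    have hB0 : u ^ b ≠ 0 := zpow_ne_zero _ hu0
    simp only [neg_sub, neg_add, neg_neg, sub_eq_add_neg, zpow_add₀ hu0, zpow_neg, zpow_one]
    field_simp
    ring
  rw [hnum, hnum, hnum, hnum, hnum, div_mul_div_comm, div_mul_div_comm,
    div_sub_div_same, key, mul_div_mul_right _ _ hd]

lemma qintM_eq_qintP : qintM pp pm = qintP pm pp := rfl

end QInt

/-! ### Relation lemmas for the operators -/

section Rels

variable (pp pm : ℕ) (α : ℂ) (r r' : ℕ)

lemma Kop_apply (v : Vrep r r') (nn : Fin r × Fin r') :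
    Kop pp pm α r r' v nn
      = α * rootOfUnity pp ^ ((r : ℤ) - 1 - 2 * (nn.1 : ℕ)) *
          rootOfUnity pm ^ ((r' : ℤ) - 1 - 2 * (nn.2 : ℕ)) * v nn := rfl

lemma EopP_apply (v : Vrep r r') (nn : Fin r × Fin r') :
    EopP pp pm α r r' v nn
      = α ^ pm * (-1 : ℂ) ^ (r' - 1) *
          (if h : (nn.1 : ℕ) + 1 < r then
            qintP pp pm ((nn.1 : ℕ) + 1) * qintP pp pm ((r : ℤ) - ((nn.1 : ℕ) + 1)) *
              v (⟨(nn.1 : ℕ) + 1, h⟩, nn.2)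
          else 0) := rfl

lemma EopM_apply (v : Vrep r r') (nn : Fin r × Fin r') :
    EopM pp pm α r r' v nn
      = α ^ pp * (-1 : ℂ) ^ (r - 1) *
          (if h : (nn.2 : ℕ) + 1 < r' then
            qintM pp pm ((nn.2 : ℕ) + 1) * qintM pp pm ((r' : ℤ) - ((nn.2 : ℕ) + 1)) *
              v (nn.1, ⟨(nn.2 : ℕ) + 1, h⟩)
          else 0) := rfl

lemma FopP_apply (v : Vrep r r') (nn : Fin r × Fin r') :
    FopP r r' v nn
      = if 0 < (nn.1 : ℕ) then
          v (⟨(nn.1 : ℕ) - 1, Nat.lt_of_le_of_lt (Nat.sub_le _ 1) nn.1.isLt⟩, nn.2)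
        else 0 := rfl

lemma FopM_apply (v : Vrep r r') (nn : Fin r × Fin r') :
    FopM r r' v nn
      = if 0 < (nn.2 : ℕ) then
          v (nn.1, ⟨(nn.2 : ℕ) - 1, Nat.lt_of_le_of_lt (Nat.sub_le _ 1) nn.2.isLt⟩)
        else 0 := rfl

lemma root_splitN (p : ℕ) (k : ℕ) (X Z : ℤ) (h : X = k + Z) :
    rootOfUnity p ^ X = rootOfUnity p ^ k * rootOfUnity p ^ Z := by
  rw [← zpow_natCast (rootOfUnity p) k]; exact root_split p k X Z h

lemma root_splitNinv (p : ℕ) (k : ℕ) (X Z : ℤ) (h : (k:ℤ) + X = Z) :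
    rootOfUnity p ^ X = (rootOfUnity p ^ k)⁻¹ * rootOfUnity p ^ Z := by
  rw [← zpow_natCast (rootOfUnity p) k, ← zpow_neg]
  exact root_split p (-k) X Z (by omega)

lemma end_ext {r r' : ℕ} {f g : Module.End ℂ (Vrep r r')}
    (h : ∀ v nn, f v nn = g v nn) : f = g :=
  LinearMap.ext fun v => funext (h v)

lemma EopP_vanish (k : ℕ) : ∀ (v : Vrep r r') (nn : Fin r × Fin r'),
    r ≤ (nn.1 : ℕ) + k → ((EopP pp pm α r r') ^ k) v nn = 0 := by
  induction k with
  | zero => intro v nn h; exact absurd h (by have := nn.1.isLt; omega)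
  | succ k ih =>
    intro v nn h
    rw [pow_succ']
    rw [Module.End.mul_apply, EopP_apply]
    split_ifs with hlt
    · rw [ih _ _ (by simp; omega), mul_zero, mul_zero]
    · rw [mul_zero]

lemma relEpNil (hr1 : 1 ≤ r) (hr2 : r ≤ pp) : (EopP pp pm α r r') ^ pp = 0 := by
  apply end_ext
  intro v nn
  rw [EopP_vanish pp pm α r r' pp v nn (by omega)]
  rfl

lemma FopP_vanish (k : ℕ) : ∀ (v : Vrep r r') (nn : Fin r × Fin r'),
    (nn.1 : ℕ) < k → ((FopP r r' : Module.End ℂ (Vrep r r')) ^ k) v nn = 0 := by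
  induction k with
  | zero => intro v nn h; omega
  | succ k ih =>
    intro v nn h
    rw [pow_succ']
    rw [Module.End.mul_apply, FopP_apply]
    split_ifs with hlt
    · exact ih _ _ (by simp; omega)
    · rfl

lemma relFpNil (pp : ℕ) (hr1 : 1 ≤ r) (hr2 : r ≤ pp) :
    (FopP r r' : Module.End ℂ (Vrep r r')) ^ pp = 0 := by
  apply end_ext
  intro v nn
  rw [FopP_vanish r r' pp v nn (by have := nn.1.isLt; omega)]
  rfl

lemma EopM_vanish (k : ℕ) : ∀ (v : Vrep r r') (nn : Fin r × Fin r'),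
    r' ≤ (nn.2 : ℕ) + k → ((EopM pp pm α r r') ^ k) v nn = 0 := by
  induction k with
  | zero => intro v nn h; exact absurd h (by have := nn.2.isLt; omega)
  | succ k ih =>
    intro v nn h
    rw [pow_succ']
    rw [Module.End.mul_apply, EopM_apply]
    split_ifs with hlt
    · rw [ih _ _ (by simp; omega), mul_zero, mul_zero]
    · rw [mul_zero]

lemma relEmNil (hr1 : 1 ≤ r') (hr2 : r' ≤ pm) : (EopM pp pm α r r') ^ pm = 0 := by
  apply end_ext
  intro v nn
  rw [EopM_vanish pp pm α r r' pm v nn (by omega)]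
  rfl

lemma FopM_vanish (k : ℕ) : ∀ (v : Vrep r r') (nn : Fin r × Fin r'),
    (nn.2 : ℕ) < k → ((FopM r r' : Module.End ℂ (Vrep r r')) ^ k) v nn = 0 := by
  induction k with
  | zero => intro v nn h; omega
  | succ k ih =>
    intro v nn h
    rw [pow_succ']
    rw [Module.End.mul_apply, FopM_apply]
    split_ifs with hlt
    · exact ih _ _ (by simp; omega)
    · rfl

lemma relFmNil (pm : ℕ) (hr1 : 1 ≤ r') (hr2 : r' ≤ pm) :
    (FopM r r' : Module.End ℂ (Vrep r r')) ^ pm = 0 := by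
  apply end_ext
  intro v nn
  rw [FopM_vanish r r' pm v nn (by have := nn.2.isLt; omega)]
  rfl

lemma Kop_pow_apply (k : ℕ) (v : Vrep r r') (nn : Fin r × Fin r') :
    ((Kop pp pm α r r') ^ k) v nn
      = (α * rootOfUnity pp ^ ((r : ℤ) - 1 - 2 * (nn.1 : ℕ)) *
          rootOfUnity pm ^ ((r' : ℤ) - 1 - 2 * (nn.2 : ℕ))) ^ k * v nn := by
  induction k with
  | zero => simp
  | succ k ih =>
    rw [pow_succ', Module.End.mul_apply, Kop_apply, ih, pow_succ]
    ring

lemma lam_pow_eq_one (hpp : 0 < pp) (hpm : 0 < pm) (hα : α = 1 ∨ α = -1) (X Y : ℤ) :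
    (α * rootOfUnity pp ^ X * rootOfUnity pm ^ Y) ^ (2 * pp * pm) = 1 := by
  rw [mul_pow, mul_pow]
  have h1 : α ^ (2 * pp * pm) = 1 := by
    rcases hα with rfl | rfl
    · rw [one_pow]
    · exact Even.neg_one_pow ⟨pp * pm, by ring⟩
  have h2 : (rootOfUnity pp ^ X) ^ (2 * pp * pm) = 1 := by
    rw [← zpow_natCast (rootOfUnity pp ^ X) (2 * pp * pm), ← zpow_mul]
    rw [root_zpow_eq_one_iff pp hpp]
    exact ⟨X * pm, by push_cast; ring⟩
  have h3 : (rootOfUnity pm ^ Y) ^ (2 * pp * pm) = 1 := by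
    rw [← zpow_natCast (rootOfUnity pm ^ Y) (2 * pp * pm), ← zpow_mul]
    rw [root_zpow_eq_one_iff pm hpm]
    exact ⟨Y * pp, by push_cast; ring⟩
  rw [h1, h2, h3, mul_one, mul_one]

lemma relKOrd (hpp : 0 < pp) (hpm : 0 < pm) (hα : α = 1 ∨ α = -1) :
    (Kop pp pm α r r') ^ (2 * pp * pm) = 1 := by
  apply end_ext
  intro v nn
  rw [Kop_pow_apply, lam_pow_eq_one pp pm α hpp hpm hα, one_mul]
  rfl

lemma relKEp : Kop pp pm α r r' * EopP pp pm α r r'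
    = algebraMap ℂ (Module.End ℂ (Vrep r r')) (rootOfUnity pp ^ 2)
        * (EopP pp pm α r r' * Kop pp pm α r r') := by
  apply end_ext
  intro v nn
  obtain ⟨n, n'⟩ := nn
  simp only [Module.End.mul_apply, Module.algebraMap_end_apply, Pi.smul_apply, smul_eq_mul,
    Kop_apply, EopP_apply, Fin.val_mk]
  split_ifs with h
  · push_cast
    rw [root_splitN pp 2 ((r:ℤ) - 1 - 2 * ((n:ℕ):ℤ)) ((r:ℤ) - 1 - 2 * (((n:ℕ):ℤ) + 1))
      (by ring)]
    ring
  · ring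

lemma relKFp : Kop pp pm α r r' * FopP r r'
    = algebraMap ℂ (Module.End ℂ (Vrep r r')) ((rootOfUnity pp ^ 2)⁻¹)
        * (FopP r r' * Kop pp pm α r r') := by
  apply end_ext
  intro v nn
  obtain ⟨n, n'⟩ := nn
  simp only [Module.End.mul_apply, Module.algebraMap_end_apply, Pi.smul_apply, smul_eq_mul,
    Kop_apply, FopP_apply, Fin.val_mk]
  split_ifs with h
  · push_cast [Nat.cast_sub (by omega : 1 ≤ (n:ℕ))]
    rw [root_splitNinv pp 2 ((r:ℤ) - 1 - 2 * ((n:ℕ):ℤ)) ((r:ℤ) - 1 - 2 * (((n:ℕ):ℤ) - 1))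
      (by ring)]
    ring
  · ring

lemma relKEm : Kop pp pm α r r' * EopM pp pm α r r'
    = algebraMap ℂ (Module.End ℂ (Vrep r r')) (rootOfUnity pm ^ 2)
        * (EopM pp pm α r r' * Kop pp pm α r r') := by
  apply end_ext
  intro v nn
  obtain ⟨n, n'⟩ := nn
  simp only [Module.End.mul_apply, Module.algebraMap_end_apply, Pi.smul_apply, smul_eq_mul,
    Kop_apply, EopM_apply, Fin.val_mk]
  split_ifs with h
  · push_cast
    rw [root_splitN pm 2 ((r':ℤ) - 1 - 2 * ((n':ℕ):ℤ)) ((r':ℤ) - 1 - 2 * (((n':ℕ):ℤ) + 1))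
      (by ring)]
    ring
  · ring

lemma relKFm : Kop pp pm α r r' * FopM r r'
    = algebraMap ℂ (Module.End ℂ (Vrep r r')) ((rootOfUnity pm ^ 2)⁻¹)
        * (FopM r r' * Kop pp pm α r r') := by
  apply end_ext
  intro v nn
  obtain ⟨n, n'⟩ := nn
  simp only [Module.End.mul_apply, Module.algebraMap_end_apply, Pi.smul_apply, smul_eq_mul,
    Kop_apply, FopM_apply, Fin.val_mk]
  split_ifs with h
  · push_cast [Nat.cast_sub (by omega : 1 ≤ (n':ℕ))]
    rw [root_splitNinv pm 2 ((r':ℤ) - 1 - 2 * ((n':ℕ):ℤ)) ((r':ℤ) - 1 - 2 * (((n':ℕ):ℤ) - 1))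
      (by ring)]
    ring
  · ring

lemma relEpEm : EopP pp pm α r r' * EopM pp pm α r r'
    = EopM pp pm α r r' * EopP pp pm α r r' := by
  apply end_ext
  intro v nn
  obtain ⟨n, n'⟩ := nn
  simp only [Module.End.mul_apply, EopP_apply, EopM_apply, Fin.val_mk]
  split_ifs with h1 h2 <;> ring

lemma relFpFm : (FopP r r' : Module.End ℂ (Vrep r r')) * FopM r r'
    = FopM r r' * FopP r r' := by
  apply end_ext
  intro v nn
  obtain ⟨n, n'⟩ := nn
  simp only [Module.End.mul_apply, FopP_apply, FopM_apply, Fin.val_mk]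
  split_ifs with h1 h2 <;> rfl

lemma relEpFm : EopP pp pm α r r' * FopM r r'
    = (FopM r r' : Module.End ℂ (Vrep r r')) * EopP pp pm α r r' := by
  apply end_ext
  intro v nn
  obtain ⟨n, n'⟩ := nn
  simp only [Module.End.mul_apply, EopP_apply, FopM_apply, Fin.val_mk]
  split_ifs with h1 h2 <;> ring

lemma relEmFp : EopM pp pm α r r' * FopP r r'
    = (FopP r r' : Module.End ℂ (Vrep r r')) * EopM pp pm α r r' := by
  apply end_ext
  intro v nn
  obtain ⟨n, n'⟩ := nn
  simp only [Module.End.mul_apply, EopM_apply, FopP_apply, Fin.val_mk]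
  split_ifs with h1 h2 <;> ring

lemma neg_one_zpow_r (r' : ℕ) (hr'1 : 1 ≤ r') (m : ℤ) :
    (-1 : ℂ) ^ ((r' : ℤ) - 1 - 2 * m) = (-1 : ℂ) ^ (r' - 1) := by
  have h1 : ((r' : ℤ) - 1 - 2 * m) = ((r' - 1 : ℕ) : ℤ) + 2 * (-m) := by
    push_cast [Nat.cast_sub hr'1]; ring
  rw [h1, zpow_add₀ (by norm_num : (-1:ℂ) ≠ 0), zpow_natCast, zpow_mul]
  norm_num

lemma lam_pow_pm_eq (hpm : 0 < pm) (hr'1 : 1 ≤ r') (X m : ℤ) :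
    (α * rootOfUnity pp ^ X * rootOfUnity pm ^ ((r' : ℤ) - 1 - 2 * m)) ^ pm
      = α ^ pm * (-1 : ℂ) ^ (r' - 1) * rootOfUnity pp ^ ((pm : ℤ) * X) := by
  rw [mul_pow, mul_pow]
  have h2 : (rootOfUnity pp ^ X) ^ pm = rootOfUnity pp ^ ((pm : ℤ) * X) := by
    rw [← zpow_natCast (rootOfUnity pp ^ X) pm, ← zpow_mul, mul_comm]
  have h3 : (rootOfUnity pm ^ ((r' : ℤ) - 1 - 2 * m)) ^ pm = (-1 : ℂ) ^ (r' - 1) := by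
    rw [← zpow_natCast (rootOfUnity pm ^ ((r' : ℤ) - 1 - 2 * m)) pm, ← zpow_mul,
      mul_comm ((r' : ℤ) - 1 - 2 * m) ((pm : ℕ) : ℤ), zpow_mul, root_pow_self pm hpm]
    exact neg_one_zpow_r r' hr'1 m
  rw [h2, h3]
  ring

lemma csq_one (hα : α = 1 ∨ α = -1) (k j : ℕ) :
    (α ^ k * (-1 : ℂ) ^ j) * (α ^ k * (-1 : ℂ) ^ j) = 1 := by
  rw [mul_mul_mul_comm, ← mul_pow, ← mul_pow]
  rcases hα with rfl | rfl <;> norm_num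

lemma lam_pow_big_eq (hpp : 0 < pp) (hpm : 0 < pm) (hα : α = 1 ∨ α = -1)
    (hr'1 : 1 ≤ r') (X m : ℤ) :
    (α * rootOfUnity pp ^ X * rootOfUnity pm ^ ((r' : ℤ) - 1 - 2 * m)) ^ (2 * pp * pm - pm)
      = α ^ pm * (-1 : ℂ) ^ (r' - 1) * rootOfUnity pp ^ (-((pm : ℤ) * X)) := by
  have hord := lam_pow_eq_one pp pm α hpp hpm hα X ((r' : ℤ) - 1 - 2 * m)
  have hsplit : (α * rootOfUnity pp ^ X * rootOfUnity pm ^ ((r' : ℤ) - 1 - 2 * m))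
        ^ (2 * pp * pm - pm)
      * (α * rootOfUnity pp ^ X * rootOfUnity pm ^ ((r' : ℤ) - 1 - 2 * m)) ^ pm = 1 := by
    rw [← pow_add, show 2 * pp * pm - pm + pm = 2 * pp * pm by
      have : pm ≤ 2 * pp * pm := by nlinarith
      omega]
    exact hord
  have h1 := eq_inv_of_mul_eq_one_left hsplit
  rw [h1, lam_pow_pm_eq pp pm α r' hpm hr'1 X m, mul_inv, zpow_neg]
  congr 1
  exact inv_eq_of_mul_eq_one_right (csq_one α hα pm (r' - 1))

lemma lam_pow_pp_eq (hpp : 0 < pp) (hr1 : 1 ≤ r) (Y m : ℤ) :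
    (α * rootOfUnity pp ^ ((r : ℤ) - 1 - 2 * m) * rootOfUnity pm ^ Y) ^ pp
      = α ^ pp * (-1 : ℂ) ^ (r - 1) * rootOfUnity pm ^ ((pp : ℤ) * Y) := by
  rw [mul_pow, mul_pow]
  have h2 : (rootOfUnity pm ^ Y) ^ pp = rootOfUnity pm ^ ((pp : ℤ) * Y) := by
    rw [← zpow_natCast (rootOfUnity pm ^ Y) pp, ← zpow_mul, mul_comm]
  have h3 : (rootOfUnity pp ^ ((r : ℤ) - 1 - 2 * m)) ^ pp = (-1 : ℂ) ^ (r - 1) := by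
    rw [← zpow_natCast (rootOfUnity pp ^ ((r : ℤ) - 1 - 2 * m)) pp, ← zpow_mul,
      mul_comm ((r : ℤ) - 1 - 2 * m) ((pp : ℕ) : ℤ), zpow_mul, root_pow_self pp hpp]
    exact neg_one_zpow_r r hr1 m
  rw [h2, h3]

lemma lam_pow_bigM_eq (hpp : 0 < pp) (hpm : 0 < pm) (hα : α = 1 ∨ α = -1)
    (hr1 : 1 ≤ r) (Y m : ℤ) :
    (α * rootOfUnity pp ^ ((r : ℤ) - 1 - 2 * m) * rootOfUnity pm ^ Y) ^ (2 * pp * pm - pp)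
      = α ^ pp * (-1 : ℂ) ^ (r - 1) * rootOfUnity pm ^ (-((pp : ℤ) * Y)) := by
  have hord := lam_pow_eq_one pp pm α hpp hpm hα ((r : ℤ) - 1 - 2 * m) Y
  have hsplit : (α * rootOfUnity pp ^ ((r : ℤ) - 1 - 2 * m) * rootOfUnity pm ^ Y)
        ^ (2 * pp * pm - pp)
      * (α * rootOfUnity pp ^ ((r : ℤ) - 1 - 2 * m) * rootOfUnity pm ^ Y) ^ pp = 1 := by
    rw [← pow_add, show 2 * pp * pm - pp + pp = 2 * pp * pm by
      have : pp ≤ 2 * pp * pm := by nlinarith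
      omega]
    exact hord
  have h1 := eq_inv_of_mul_eq_one_left hsplit
  rw [h1, lam_pow_pp_eq pp pm α r hpp hr1 Y m, mul_inv, zpow_neg]
  congr 1
  exact inv_eq_of_mul_eq_one_right (csq_one α hα pp (r - 1))

lemma relEpFp (hpp : 2 ≤ pp) (hpm : 2 ≤ pm) (hco : Nat.Coprime pp pm)
    (hα : α = 1 ∨ α = -1) (hr1 : 1 ≤ r) (hr2 : r ≤ pp) (hr'1 : 1 ≤ r') (hr'2 : r' ≤ pm) :
    EopP pp pm α r r' * FopP r r' - FopP r r' * EopP pp pm α r r'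
    = algebraMap ℂ (Module.End ℂ (Vrep r r'))
        ((rootOfUnity pp ^ pm - (rootOfUnity pp ^ pm)⁻¹)⁻¹)
        * ((Kop pp pm α r r') ^ pm - (Kop pp pm α r r') ^ (2 * pp * pm - pm)) := by
  apply end_ext
  intro v nn
  obtain ⟨n, n'⟩ := nn
  simp only [LinearMap.sub_apply, Pi.sub_apply, Module.End.mul_apply,
    Module.algebraMap_end_apply, Pi.smul_apply, smul_eq_mul,
    EopP_apply, FopP_apply, Kop_pow_apply, Fin.val_mk]
  rw [lam_pow_pm_eq pp pm α r' (by omega) hr'1 ((r : ℤ) - 1 - 2 * ((n:ℕ):ℤ)) ((n':ℕ):ℤ),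
    lam_pow_big_eq pp pm α r' (by omega) (by omega) hα hr'1
      ((r : ℤ) - 1 - 2 * ((n:ℕ):ℤ)) ((n':ℕ):ℤ)]
  have hlt := n.isLt
  have hD' : rootOfUnity pp ^ pm - (rootOfUnity pp ^ pm)⁻¹ ≠ 0 := by
    rw [← zpow_natCast (rootOfUnity pp) pm, ← zpow_neg]
    exact qden_ne_zero pp pm hpp hco
  have hnum : qintP pp pm ((r:ℤ) - 1 - 2*((n:ℕ):ℤ))
        * (rootOfUnity pp ^ pm - (rootOfUnity pp ^ pm)⁻¹)
      = rootOfUnity pp ^ ((pm:ℤ) * ((r:ℤ) - 1 - 2*((n:ℕ):ℤ)))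
        - rootOfUnity pp ^ (-((pm:ℤ) * ((r:ℤ) - 1 - 2*((n:ℕ):ℤ)))) := by
    rw [← zpow_natCast (rootOfUnity pp) pm, ← zpow_neg, qintP,
      div_mul_cancel₀ _ (qden_ne_zero pp pm hpp hco)]
  have hq := qint_identity pp pm hpp hco (((n:ℕ):ℤ) + 1) ((r : ℤ) - (((n:ℕ):ℤ) + 1))
  rw [show (((n:ℕ):ℤ) + 1 - 1) = ((n:ℕ):ℤ) by ring,
      show ((r : ℤ) - (((n:ℕ):ℤ) + 1) + 1) = (r:ℤ) - ((n:ℕ):ℤ) by ring,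
      show ((r : ℤ) - ((n:ℕ):ℤ) - (((n:ℕ):ℤ) + 1)) = (r:ℤ) - 1 - 2*((n:ℕ):ℤ)
        by ring] at hq
  split_ifs with h1 h2 h3 h4 h5 h6 h7 h8 <;>
    first
    | (exfalso; omega)
    | (try simp only [Nat.add_sub_cancel, Fin.eta]
       try push_cast [Nat.cast_sub (show 1 ≤ (n:ℕ) by omega)]
       try rw [show ((n:ℕ):ℤ) - 1 + 1 = ((n:ℕ):ℤ) by ring]
       try simp only [show (n:ℕ) - 1 + 1 = (n:ℕ) by omega, Fin.eta]
       try rw [show qintP pp pm ((r:ℤ) - (((n:ℕ):ℤ) + 1)) = 0 from by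
            rw [show (r:ℤ) - (((n:ℕ):ℤ) + 1) = 0 by omega]; exact qintP_zero pp pm] at hq
       try rw [show qintP pp pm ((n:ℕ):ℤ) = 0 from by
            rw [show ((n:ℕ):ℤ) = 0 by omega]; exact qintP_zero pp pm] at hq
       rw [inv_mul_eq_div, eq_div_iff hD']
       linear_combination (α ^ pm * (-1:ℂ) ^ (r' - 1) * v (n, n')
           * (rootOfUnity pp ^ pm - (rootOfUnity pp ^ pm)⁻¹)) * hq
         + (α ^ pm * (-1:ℂ) ^ (r' - 1) * v (n, n')) * hnum)

lemma relEmFm (hpp : 2 ≤ pp) (hpm : 2 ≤ pm) (hco : Nat.Coprime pp pm)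
    (hα : α = 1 ∨ α = -1) (hr1 : 1 ≤ r) (hr2 : r ≤ pp) (hr'1 : 1 ≤ r') (hr'2 : r' ≤ pm) :
    EopM pp pm α r r' * FopM r r' - FopM r r' * EopM pp pm α r r'
    = algebraMap ℂ (Module.End ℂ (Vrep r r'))
        ((rootOfUnity pm ^ pp - (rootOfUnity pm ^ pp)⁻¹)⁻¹)
        * ((Kop pp pm α r r') ^ pp - (Kop pp pm α r r') ^ (2 * pp * pm - pp)) := by
  apply end_ext
  intro v nn
  obtain ⟨n, n'⟩ := nn
  simp only [LinearMap.sub_apply, Pi.sub_apply, Module.End.mul_apply,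
    Module.algebraMap_end_apply, Pi.smul_apply, smul_eq_mul,
    EopM_apply, FopM_apply, Kop_pow_apply, Fin.val_mk, qintM_eq_qintP]
  rw [lam_pow_pp_eq pp pm α r (by omega) hr1 ((r' : ℤ) - 1 - 2 * ((n':ℕ):ℤ)) ((n:ℕ):ℤ),
    lam_pow_bigM_eq pp pm α r (by omega) (by omega) hα hr1
      ((r' : ℤ) - 1 - 2 * ((n':ℕ):ℤ)) ((n:ℕ):ℤ)]
  have hlt := n'.isLt
  have hD' : rootOfUnity pm ^ pp - (rootOfUnity pm ^ pp)⁻¹ ≠ 0 := by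
    rw [← zpow_natCast (rootOfUnity pm) pp, ← zpow_neg]
    exact qden_ne_zero pm pp hpm hco.symm
  have hnum : qintP pm pp ((r':ℤ) - 1 - 2*((n':ℕ):ℤ))
        * (rootOfUnity pm ^ pp - (rootOfUnity pm ^ pp)⁻¹)
      = rootOfUnity pm ^ ((pp:ℤ) * ((r':ℤ) - 1 - 2*((n':ℕ):ℤ)))
        - rootOfUnity pm ^ (-((pp:ℤ) * ((r':ℤ) - 1 - 2*((n':ℕ):ℤ)))) := by
    rw [← zpow_natCast (rootOfUnity pm) pp, ← zpow_neg, qintP,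
      div_mul_cancel₀ _ (qden_ne_zero pm pp hpm hco.symm)]
  have hq := qint_identity pm pp hpm hco.symm (((n':ℕ):ℤ) + 1) ((r' : ℤ) - (((n':ℕ):ℤ) + 1))
  rw [show (((n':ℕ):ℤ) + 1 - 1) = ((n':ℕ):ℤ) by ring,
      show ((r' : ℤ) - (((n':ℕ):ℤ) + 1) + 1) = (r':ℤ) - ((n':ℕ):ℤ) by ring,
      show ((r' : ℤ) - ((n':ℕ):ℤ) - (((n':ℕ):ℤ) + 1)) = (r':ℤ) - 1 - 2*((n':ℕ):ℤ)
        by ring] at hq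
  split_ifs with h1 h2 h3 h4 h5 h6 h7 h8 <;>
    first
    | (exfalso; omega)
    | (try simp only [Nat.add_sub_cancel, Fin.eta]
       try push_cast [Nat.cast_sub (show 1 ≤ (n':ℕ) by omega)]
       try rw [show ((n':ℕ):ℤ) - 1 + 1 = ((n':ℕ):ℤ) by ring]
       try simp only [show (n':ℕ) - 1 + 1 = (n':ℕ) by omega, Fin.eta]
       try rw [show qintP pm pp ((r':ℤ) - (((n':ℕ):ℤ) + 1)) = 0 from by
            rw [show (r':ℤ) - (((n':ℕ):ℤ) + 1) = 0 by omega]; exact qintP_zero pm pp] at hq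
       try rw [show qintP pm pp ((n':ℕ):ℤ) = 0 from by
            rw [show ((n':ℕ):ℤ) = 0 by omega]; exact qintP_zero pm pp] at hq
       rw [inv_mul_eq_div, eq_div_iff hD']
       linear_combination (α ^ pp * (-1:ℂ) ^ (r - 1) * v (n, n')
           * (rootOfUnity pm ^ pp - (rootOfUnity pm ^ pp)⁻¹)) * hq
         + (α ^ pp * (-1:ℂ) ^ (r - 1) * v (n, n')) * hnum)

end Rels


/-! ### Simplicity -/

section Simple

variable (pp pm : ℕ) (α : ℂ) (r r' : ℕ)

/-- The eigenvalue of `K` on the basis vector `a_{n,n'}`. -/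
def lamv (nn : Fin r × Fin r') : ℂ :=
  α * rootOfUnity pp ^ ((r : ℤ) - 1 - 2 * (nn.1 : ℕ)) *
    rootOfUnity pm ^ ((r' : ℤ) - 1 - 2 * (nn.2 : ℕ))

lemma not_dvd_of_bounds (p : ℕ) (z : ℤ) (h0 : 0 < z) (h1 : z < p) : ¬ (p : ℤ) ∣ z :=
  fun hd => absurd (Int.le_of_dvd h0 hd) (by omega)

lemma lamv_inj (hpp : 2 ≤ pp) (hpm : 2 ≤ pm) (hco : Nat.Coprime pp pm)
    (hα : α = 1 ∨ α = -1) (hr2 : r ≤ pp) (hr'2 : r' ≤ pm)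
    {nn mm : Fin r × Fin r'} (h : lamv pp pm α r r' nn = lamv pp pm α r r' mm) :
    nn = mm := by
  obtain ⟨n, n'⟩ := nn
  obtain ⟨m, m'⟩ := mm
  have hn := n.isLt; have hm := m.isLt; have hn' := n'.isLt; have hm' := m'.isLt
  have hα0 : α ≠ 0 := by rcases hα with rfl | rfl <;> norm_num
  simp only [lamv] at h
  have h1 : rootOfUnity pp ^ ((r:ℤ) - 1 - 2*((n:ℕ):ℤ)) *
        rootOfUnity pm ^ ((r':ℤ) - 1 - 2*((n':ℕ):ℤ))
      = rootOfUnity pp ^ ((r:ℤ) - 1 - 2*((m:ℕ):ℤ)) *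
        rootOfUnity pm ^ ((r':ℤ) - 1 - 2*((m':ℕ):ℤ)) :=
    mul_left_cancel₀ hα0 (by linear_combination h)
  rw [root_mul_root pp pm (by omega) (by omega),
    root_mul_root pp pm (by omega) (by omega)] at h1
  have h2 : rootOfUnity (pp * pm) ^
      ((((r:ℤ) - 1 - 2*((n:ℕ):ℤ)) * pm + ((r':ℤ) - 1 - 2*((n':ℕ):ℤ)) * pp)
        - (((r:ℤ) - 1 - 2*((m:ℕ):ℤ)) * pm + ((r':ℤ) - 1 - 2*((m':ℕ):ℤ)) * pp)) = 1 := by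
    rw [zpow_sub₀ (root_ne_zero _), h1, div_self (zpow_ne_zero _ (root_ne_zero _))]
  rw [root_zpow_eq_one_iff (pp * pm) (by positivity),
    show ((((r:ℤ) - 1 - 2*((n:ℕ):ℤ)) * pm + ((r':ℤ) - 1 - 2*((n':ℕ):ℤ)) * pp)
        - (((r:ℤ) - 1 - 2*((m:ℕ):ℤ)) * pm + ((r':ℤ) - 1 - 2*((m':ℕ):ℤ)) * pp))
      = 2 * ((((m:ℕ):ℤ) - ((n:ℕ):ℤ)) * pm + (((m':ℕ):ℤ) - ((n':ℕ):ℤ)) * pp) by push_cast; ring,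
    show (2 * ((pp * pm : ℕ) : ℤ)) = 2 * ((pp:ℤ) * pm) by push_cast; ring] at h2
  have h3 : ((pp:ℤ) * pm) ∣ (((m:ℕ):ℤ) - ((n:ℕ):ℤ)) * pm + (((m':ℕ):ℤ) - ((n':ℕ):ℤ)) * pp :=
    (mul_dvd_mul_iff_left (by norm_num : (2:ℤ) ≠ 0)).mp h2
  have hcop : IsCoprime (pp : ℤ) (pm : ℤ) := Int.isCoprime_iff_gcd_eq_one.mpr hco
  have h5 : (pp:ℤ) ∣ (((m:ℕ):ℤ) - ((n:ℕ):ℤ)) * pm := by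
    have h6 := (dvd_mul_right (pp:ℤ) (pm:ℤ)).trans h3
    have h7 : (pp:ℤ) ∣ (((m':ℕ):ℤ) - ((n':ℕ):ℤ)) * pp := dvd_mul_left _ _
    have h8 := h6.sub h7
    rwa [add_sub_cancel_right] at h8
  have h9 : ((m:ℕ):ℤ) - ((n:ℕ):ℤ) = 0 :=
    Int.eq_zero_of_abs_lt_dvd (hcop.dvd_of_dvd_mul_right h5)
      (abs_lt.mpr ⟨by omega, by omega⟩)
  have h10 : (pm:ℤ) ∣ (((m':ℕ):ℤ) - ((n':ℕ):ℤ)) * pp := by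
    have h11 := (dvd_mul_left (pm:ℤ) (pp:ℤ)).trans h3
    rw [h9, zero_mul, zero_add] at h3
    have h12 : (pm:ℤ) ∣ (pp:ℤ) * pm := dvd_mul_left _ _
    exact h12.trans h3
  have h13 : ((m':ℕ):ℤ) - ((n':ℕ):ℤ) = 0 :=
    Int.eq_zero_of_abs_lt_dvd (hcop.symm.dvd_of_dvd_mul_right h10)
      (abs_lt.mpr ⟨by omega, by omega⟩)
  have e1 : n = m := Fin.ext (by omega)
  have e2 : n' = m' := Fin.ext (by omega)
  rw [e1, e2]

lemma Kop_apply_lamv (v : Vrep r r') (nn : Fin r × Fin r') :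
    Kop pp pm α r r' v nn = lamv pp pm α r r' nn * v nn := rfl

lemma Kshift_apply (c : ℂ) (w : Vrep r r') (nn : Fin r × Fin r') :
    ((Kop pp pm α r r' - c • (1 : Module.End ℂ (Vrep r r'))) w) nn
      = (lamv pp pm α r r' nn - c) * w nn := by
  rw [LinearMap.sub_apply, LinearMap.smul_apply, Module.End.one_apply, Pi.sub_apply,
    Pi.smul_apply, smul_eq_mul, Kop_apply_lamv]
  ring

/-- The delta function at a basis point. -/
def delta (nn : Fin r × Fin r') : Vrep r r' := fun mm => if nn = mm then 1 else 0

lemma FopP_delta (a : Fin r) (b : Fin r') (h : (a:ℕ) + 1 < r) :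
    FopP r r' (delta r r' (a, b)) = delta r r' (⟨(a:ℕ) + 1, h⟩, b) := by
  funext mm
  obtain ⟨m, m'⟩ := mm
  simp only [FopP_apply, delta]
  split_ifs with h1 h2 h3 <;>
    first
    | rfl
    | (exfalso; simp only [Prod.mk.injEq, Fin.ext_iff, Fin.val_mk] at *; omega)

lemma FopM_delta (a : Fin r) (b : Fin r') (h : (b:ℕ) + 1 < r') :
    FopM r r' (delta r r' (a, b)) = delta r r' (a, ⟨(b:ℕ) + 1, h⟩) := by
  funext mm
  obtain ⟨m, m'⟩ := mm
  simp only [FopM_apply, delta]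
  split_ifs with h1 h2 h3 <;>
    first
    | rfl
    | (exfalso; simp only [Prod.mk.injEq, Fin.ext_iff, Fin.val_mk] at *; omega)

lemma EopP_delta (a : Fin r) (b : Fin r') (ha : 0 < (a:ℕ)) :
    EopP pp pm α r r' (delta r r' (a, b))
      = (α ^ pm * (-1:ℂ) ^ (r' - 1) *
          (qintP pp pm ((a:ℕ):ℤ) * qintP pp pm ((r:ℤ) - ((a:ℕ):ℤ)))) •
        delta r r' (⟨(a:ℕ) - 1, Nat.lt_of_le_of_lt (Nat.sub_le _ 1) a.isLt⟩, b) := by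
  have hlt := a.isLt
  funext mm
  obtain ⟨m, m'⟩ := mm
  have hltm := m.isLt
  simp only [EopP_apply, delta, Pi.smul_apply, smul_eq_mul]
  split_ifs with h1 h2 h3 <;>
    first
    | (exfalso; simp only [Prod.mk.injEq, Fin.ext_iff, Fin.val_mk] at *; omega)
    | (push_cast; ring1)
    | (simp only [Prod.mk.injEq, Fin.ext_iff, Fin.val_mk] at *
       rw [show (a:ℕ) = (m:ℕ) + 1 by omega]
       push_cast
       ring)

lemma EopM_delta (a : Fin r) (b : Fin r') (hb : 0 < (b:ℕ)) :
    EopM pp pm α r r' (delta r r' (a, b))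
      = (α ^ pp * (-1:ℂ) ^ (r - 1) *
          (qintM pp pm ((b:ℕ):ℤ) * qintM pp pm ((r':ℤ) - ((b:ℕ):ℤ)))) •
        delta r r' (a, ⟨(b:ℕ) - 1, Nat.lt_of_le_of_lt (Nat.sub_le _ 1) b.isLt⟩) := by
  have hlt := b.isLt
  funext mm
  obtain ⟨m, m'⟩ := mm
  have hltm := m'.isLt
  simp only [EopM_apply, delta, Pi.smul_apply, smul_eq_mul]
  split_ifs with h1 h2 h3 <;>
    first
    | (exfalso; simp only [Prod.mk.injEq, Fin.ext_iff, Fin.val_mk] at *; omega)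
    | (push_cast; ring1)
    | (simp only [Prod.mk.injEq, Fin.ext_iff, Fin.val_mk] at *
       rw [show (b:ℕ) = (m':ℕ) + 1 by omega]
       push_cast
       ring)

lemma simple_submodule (hpp : 2 ≤ pp) (hpm : 2 ≤ pm) (hco : Nat.Coprime pp pm)
    (hα : α = 1 ∨ α = -1) (hr1 : 1 ≤ r) (hr2 : r ≤ pp) (hr'1 : 1 ≤ r') (hr'2 : r' ≤ pm)
    (U : Submodule ℂ (Vrep r r'))
    (hK : ∀ x ∈ U, Kop pp pm α r r' x ∈ U)
    (hEp : ∀ x ∈ U, EopP pp pm α r r' x ∈ U)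
    (hEm : ∀ x ∈ U, EopM pp pm α r r' x ∈ U)
    (hFp : ∀ x ∈ U, FopP r r' x ∈ U)
    (hFm : ∀ x ∈ U, FopM r r' x ∈ U) :
    U = ⊥ ∨ U = ⊤ := by
  classical
  by_cases hbot : U = ⊥
  · exact Or.inl hbot
  right
  obtain ⟨v, hvU, hv0⟩ := (Submodule.ne_bot_iff U).mp hbot
  obtain ⟨nn₀, hnn₀⟩ := Function.ne_iff.mp hv0
  have hv₀ : v nn₀ ≠ 0 := by simpa using hnn₀
  have hα0 : α ≠ 0 := by rcases hα with rfl | rfl <;> norm_num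
  -- closure of U under shifted K operators
  have hstep : ∀ (c : ℂ), ∀ y ∈ U,
      (Kop pp pm α r r' - c • (1 : Module.End ℂ (Vrep r r'))) y ∈ U := by
    intro c y hy
    rw [LinearMap.sub_apply, LinearMap.smul_apply, Module.End.one_apply]
    exact U.sub_mem (hK y hy) (U.smul_mem c hy)
  have hmem : ∀ s : Finset (Fin r × Fin r'), ∃ w ∈ U, ∀ nn : Fin r × Fin r',
      w nn = (∏ mm ∈ s, (lamv pp pm α r r' nn - lamv pp pm α r r' mm)) * v nn := by
    intro s
    induction s using Finset.induction_on with
    | empty => exact ⟨v, hvU, fun nn => by simp⟩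
    | @insert aa ss hnot ih =>
      obtain ⟨w, hwU, hwev⟩ := ih
      refine ⟨(Kop pp pm α r r' - lamv pp pm α r r' aa •
        (1 : Module.End ℂ (Vrep r r'))) w, hstep _ _ hwU, fun nn => ?_⟩
      rw [Kshift_apply, hwev, Finset.prod_insert hnot]
      ring
  -- U contains a delta function
  have hδ : delta r r' nn₀ ∈ U := by
    obtain ⟨w, hwU, hwev⟩ := hmem (Finset.univ.erase nn₀)
    have hc0 : (∏ mm ∈ Finset.univ.erase nn₀,
        (lamv pp pm α r r' nn₀ - lamv pp pm α r r' mm)) ≠ 0 := by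
      rw [Finset.prod_ne_zero_iff]
      intro mm hmm
      have hne : mm ≠ nn₀ := Finset.ne_of_mem_erase hmm
      exact sub_ne_zero.mpr fun he =>
        hne (lamv_inj pp pm α r r' hpp hpm hco hα hr2 hr'2 he.symm)
    have hkey : delta r r' nn₀
        = ((∏ mm ∈ Finset.univ.erase nn₀,
              (lamv pp pm α r r' nn₀ - lamv pp pm α r r' mm)) * v nn₀)⁻¹ • w := by
      funext mm
      rw [Pi.smul_apply, smul_eq_mul, hwev]
      by_cases he : nn₀ = mm
      · subst he
        simp only [delta, if_pos rfl]
        exact (inv_mul_cancel₀ (mul_ne_zero hc0 hv₀)).symm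
      · simp only [delta, if_neg he]
        have hzero : (∏ kk ∈ Finset.univ.erase nn₀,
            (lamv pp pm α r r' mm - lamv pp pm α r r' kk)) = 0 :=
          Finset.prod_eq_zero
            (Finset.mem_erase.mpr ⟨fun hh => he hh.symm, Finset.mem_univ mm⟩) (sub_self _)
        rw [hzero, zero_mul, mul_zero]
    rw [hkey]
    exact U.smul_mem _ hwU
  -- scalars in the E-steps are nonzero
  have hscalP : ∀ a : Fin r, 0 < (a:ℕ) → (α ^ pm * (-1:ℂ) ^ (r' - 1) *
      (qintP pp pm ((a:ℕ):ℤ) * qintP pp pm ((r:ℤ) - ((a:ℕ):ℤ)))) ≠ 0 := by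
    intro a ha
    have hlt := a.isLt
    refine mul_ne_zero (mul_ne_zero (pow_ne_zero _ hα0) (pow_ne_zero _ (by norm_num)))
      (mul_ne_zero ?_ ?_)
    · exact qintP_ne_zero pp pm hpp hco _ (not_dvd_of_bounds pp _ (by omega) (by omega))
    · exact qintP_ne_zero pp pm hpp hco _ (not_dvd_of_bounds pp _ (by omega) (by omega))
  have hscalM : ∀ b : Fin r', 0 < (b:ℕ) → (α ^ pp * (-1:ℂ) ^ (r - 1) *
      (qintM pp pm ((b:ℕ):ℤ) * qintM pp pm ((r':ℤ) - ((b:ℕ):ℤ)))) ≠ 0 := by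
    intro b hb
    have hlt := b.isLt
    simp only [qintM_eq_qintP]
    refine mul_ne_zero (mul_ne_zero (pow_ne_zero _ hα0) (pow_ne_zero _ (by norm_num)))
      (mul_ne_zero ?_ ?_)
    · exact qintP_ne_zero pm pp hpm hco.symm _ (not_dvd_of_bounds pm _ (by omega) (by omega))
    · exact qintP_ne_zero pm pp hpm hco.symm _ (not_dvd_of_bounds pm _ (by omega) (by omega))
  have hr0 : 0 < r := by omega
  have hr'0 : 0 < r' := by omega
  -- move down to (0, b)
  have hdownP : ∀ (k : ℕ) (a : Fin r) (b : Fin r'), (a:ℕ) = k →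
      delta r r' (a, b) ∈ U → delta r r' (⟨0, hr0⟩, b) ∈ U := by
    intro k
    induction k with
    | zero =>
      intro a b ha hmem2
      have he : a = ⟨0, hr0⟩ := Fin.ext (by simpa using ha)
      rwa [he] at hmem2
    | succ k ih =>
      intro a b ha hmem2
      have hpos : 0 < (a:ℕ) := by omega
      have h1 := hEp _ hmem2
      rw [EopP_delta pp pm α r r' a b hpos] at h1
      have h2 := U.smul_mem (α ^ pm * (-1:ℂ) ^ (r' - 1) *
        (qintP pp pm ((a:ℕ):ℤ) * qintP pp pm ((r:ℤ) - ((a:ℕ):ℤ))))⁻¹ h1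
      rw [smul_smul, inv_mul_cancel₀ (hscalP a hpos), one_smul] at h2
      exact ih _ b (by show (a:ℕ) - 1 = k; omega) h2
  have hdownM : ∀ (k : ℕ) (a : Fin r) (b : Fin r'), (b:ℕ) = k →
      delta r r' (a, b) ∈ U → delta r r' (a, ⟨0, hr'0⟩) ∈ U := by
    intro k
    induction k with
    | zero =>
      intro a b hb hmem2
      have he : b = ⟨0, hr'0⟩ := Fin.ext (by simpa using hb)
      rwa [he] at hmem2
    | succ k ih =>
      intro a b hb hmem2
      have hpos : 0 < (b:ℕ) := by omega
      have h1 := hEm _ hmem2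
      rw [EopM_delta pp pm α r r' a b hpos] at h1
      have h2 := U.smul_mem (α ^ pp * (-1:ℂ) ^ (r - 1) *
        (qintM pp pm ((b:ℕ):ℤ) * qintM pp pm ((r':ℤ) - ((b:ℕ):ℤ))))⁻¹ h1
      rw [smul_smul, inv_mul_cancel₀ (hscalM b hpos), one_smul] at h2
      exact ih a _ (by show (b:ℕ) - 1 = k; omega) h2
  obtain ⟨n₀, n₀'⟩ := nn₀
  have h00 : delta r r' (⟨0, hr0⟩, ⟨0, hr'0⟩) ∈ U :=
    hdownM _ _ _ rfl (hdownP _ _ _ rfl hδ)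
  -- move up everywhere
  have hupP : ∀ (k : ℕ) (hk : k < r), delta r r' (⟨k, hk⟩, ⟨0, hr'0⟩) ∈ U := by
    intro k
    induction k with
    | zero => intro hk; exact h00
    | succ k ih =>
      intro hk
      have hk' : k < r := by omega
      have h1 := hFp _ (ih hk')
      rwa [FopP_delta r r' ⟨k, hk'⟩ ⟨0, hr'0⟩ hk] at h1
  have hupAll : ∀ (a : Fin r) (k : ℕ) (hk : k < r'), delta r r' (a, ⟨k, hk⟩) ∈ U := by
    intro a k
    induction k with
    | zero =>
      intro hk
      have := hupP (a:ℕ) a.isLt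
      simpa using this
    | succ k ih =>
      intro hk
      have hk' : k < r' := by omega
      have h1 := hFm _ (ih hk')
      rwa [FopM_delta r r' a ⟨k, hk'⟩ hk] at h1
  rw [Submodule.eq_top_iff']
  intro x
  rw [pi_eq_sum_univ x]
  apply Submodule.sum_mem
  intro nn _
  apply Submodule.smul_mem
  have := hupAll nn.1 (nn.2:ℕ) nn.2.isLt
  exact this

end Simple

/-- The displayed operators define a `g_{p₊,p₋}`-module structure on `X^α_{r,r'}`, of
dimension `r·r'`, and the resulting module is simple. -/
theorem std_module_exists_and_simple (pp pm : ℕ) (hpp : 2 ≤ pp) (hpm : 2 ≤ pm)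
    (hco : Nat.Coprime pp pm) (α : ℂ) (hα : α = 1 ∨ α = -1)
    (r r' : ℕ) (hr1 : 1 ≤ r) (hr2 : r ≤ pp) (hr'1 : 1 ≤ r') (hr'2 : r' ≤ pm) :
    ∃ ρ : QG pp pm →ₐ[ℂ] Module.End ℂ (Vrep r r'),
      IsStdRep pp pm α r r' ρ ∧
      Module.finrank ℂ (Vrep r r') = r * r' ∧
      ∀ U : Submodule ℂ (Vrep r r'),
        (∀ (a : QG pp pm), ∀ x ∈ U, ρ a x ∈ U) → U = ⊥ ∨ U = ⊤ := by
  classical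
  set φ : FreeAlgebra ℂ QGGen →ₐ[ℂ] Module.End ℂ (Vrep r r') :=
    FreeAlgebra.lift ℂ (fun x => match x with
      | QGGen.K => Kop pp pm α r r'
      | QGGen.Ep => EopP pp pm α r r'
      | QGGen.Em => EopM pp pm α r r'
      | QGGen.Fp => FopP r r'
      | QGGen.Fm => FopM r r') with hφ
  have hφι : ∀ x : QGGen, φ (ι ℂ x) = (match x with
      | QGGen.K => Kop pp pm α r r'
      | QGGen.Ep => EopP pp pm α r r'
      | QGGen.Em => EopM pp pm α r r'
      | QGGen.Fp => FopP r r'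
      | QGGen.Fm => FopM r r') := by
    intro x
    rw [hφ, FreeAlgebra.lift_ι_apply]
  have hrel : ∀ ⦃x y : FreeAlgebra ℂ QGGen⦄, QGRel pp pm x y → φ x = φ y := by
    intro x y hxy
    cases hxy <;>
      simp only [map_mul, map_pow, map_sub, map_one, map_zero, AlgHom.commutes, hφι]
    · exact relEpNil pp pm α r r' hr1 hr2
    · exact relFpNil r r' pp hr1 hr2
    · exact relEmNil pp pm α r r' hr'1 hr'2
    · exact relFmNil r r' pm hr'1 hr'2
    · exact relKOrd pp pm α r r' (by omega) (by omega) hα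
    · rw [← map_pow]; exact relKEp pp pm α r r'
    · exact relKFp pp pm α r r'
    · rw [← map_pow]; exact relKEm pp pm α r r'
    · exact relKFm pp pm α r r'
    · exact relEpEm pp pm α r r'
    · exact relFpFm r r'
    · exact relEpFm pp pm α r r'
    · exact relEmFp pp pm α r r'
    · exact relEpFp pp pm α r r' hpp hpm hco hα hr1 hr2 hr'1 hr'2
    · exact relEmFm pp pm α r r' hpp hpm hco hα hr1 hr2 hr'1 hr'2
  refine ⟨RingQuot.liftAlgHom ℂ ⟨φ, hrel⟩, ?_, ?_, ?_⟩
  · refine ⟨?_, ?_, ?_, ?_, ?_⟩ <;>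
      · rw [gen, RingQuot.liftAlgHom_mkAlgHom_apply, hφι]
  · simp [Vrep]
  · intro U hU
    have hK := hU (gen pp pm QGGen.K)
    have hEp := hU (gen pp pm QGGen.Ep)
    have hEm := hU (gen pp pm QGGen.Em)
    have hFp := hU (gen pp pm QGGen.Fp)
    have hFm := hU (gen pp pm QGGen.Fm)
    simp only [gen, RingQuot.liftAlgHom_mkAlgHom_apply, hφι] at hK hEp hEm hFp hFm
    exact simple_submodule pp pm α r r' hpp hpm hco hα hr1 hr2 hr'1 hr'2 U hK hEp hEm hFp hFm
end
end

section
/- In g_{p₊,p₋}, evaluating Chebyshev polynomials at the Casimir elements gives U_{p₊+1}(C₊) − U_{p₊−1}(C₊) = (−1)^{p₊+p₋}·2·K^{p₊p₋} = U_{p₋+1}(C₋) − U_{p₋−1}(C₋). -/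
noncomputable section

open FreeAlgebra QGGen

/-- The Casimir element `C₊` of `g_{p₊,p₋}`. -/
def CasP (pp pm : ℕ) : QG pp pm :=
  -(algebraMap ℂ (QG pp pm) (rootOfUnity pp ^ pm) * gen pp pm K ^ (2 * pp * pm - pm)) -
    algebraMap ℂ (QG pp pm) ((rootOfUnity pp ^ pm)⁻¹) * gen pp pm K ^ pm -
    algebraMap ℂ (QG pp pm) ((rootOfUnity pp ^ pm - (rootOfUnity pp ^ pm)⁻¹) ^ 2) *
      (gen pp pm Ep * gen pp pm Fp)

/-- The Casimir element `C₋` of `g_{p₊,p₋}`. -/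
def CasM (pp pm : ℕ) : QG pp pm :=
  -(algebraMap ℂ (QG pp pm) (rootOfUnity pm ^ pp) * gen pp pm K ^ (2 * pp * pm - pp)) -
    algebraMap ℂ (QG pp pm) ((rootOfUnity pm ^ pp)⁻¹) * gen pp pm K ^ pp -
    algebraMap ℂ (QG pp pm) ((rootOfUnity pm ^ pp - (rootOfUnity pm ^ pp)⁻¹) ^ 2) *
      (gen pp pm Em * gen pp pm Fm)

/-- Chebyshev polynomials of the second kind: `U 0 = 0`, `U 1 = 1`,
`U (s+2) = X·U (s+1) − U s` (so `U_s(2 cos t) = sin(st)/sin t`). -/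
def chebU : ℕ → Polynomial ℂ
  | 0 => 0
  | 1 => 1
  | (n + 2) => Polynomial.X * chebU (n + 1) - chebU n


section ChebyshevCasimirAux

open Polynomial Finset

lemma cheb_eval (y : ℂ) (hy : y ≠ 0) : ∀ s : ℕ,
    (y - y⁻¹) * (chebU s).eval (y + y⁻¹) = y ^ s - (y⁻¹) ^ s
  | 0 => by simp [chebU]
  | 1 => by simp [chebU]
  | (n + 2) => by
      have h1 := cheb_eval y hy (n + 1)
      have h0 := cheb_eval y hy n
      have hyy : y * y⁻¹ = 1 := mul_inv_cancel₀ hy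
      rw [chebU]
      simp only [eval_sub, eval_mul, eval_X]
      linear_combination (y + y⁻¹) * h1 - h0 + (y ^ n - (y⁻¹) ^ n) * hyy

lemma cheb_pair (y : ℂ) (hy : y ≠ 0) (hy1 : y ^ 2 ≠ 1) (p : ℕ) (hp : 2 ≤ p) :
    (chebU (p + 1) - chebU (p - 1)).eval (y + y⁻¹) = y ^ p + (y⁻¹) ^ p := by
  obtain ⟨n, rfl⟩ : ∃ n, p = n + 2 := ⟨p - 2, by omega⟩
  have h1 := cheb_eval y hy (n + 3)
  have h0 := cheb_eval y hy (n + 1)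
  have hsub : y - y⁻¹ ≠ 0 := by
    intro h
    apply hy1
    have h2 : y = y⁻¹ := sub_eq_zero.mp h
    rw [pow_two]
    nth_rewrite 2 [h2]
    exact mul_inv_cancel₀ hy
  have hyy : y * y⁻¹ = 1 := mul_inv_cancel₀ hy
  apply mul_left_cancel₀ hsub
  have hidx : (n + 2 : ℕ) - 1 = n + 1 := rfl
  have hidx2 : (n + 2 : ℕ) + 1 = n + 3 := rfl
  rw [eval_sub, mul_sub, hidx, hidx2, h1, h0]
  linear_combination (y ^ (n + 1) - (y⁻¹) ^ (n + 1)) * hyy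

lemma prod_lin (p : ℕ) (hp : 0 < p) (ζ α z : ℂ) (hζ : IsPrimitiveRoot ζ p) :
    ∏ j ∈ range p, (z - ζ ^ j * α) = z ^ p - α ^ p := by
  have h := X_pow_sub_C_eq_prod hζ hp (rfl : α ^ p = α ^ p)
  have := congrArg (Polynomial.eval z) h
  simpa [eval_prod] using this.symm

lemma scalar_main (p p' : ℕ) (hp : 2 ≤ p) (q : ℂ) (prim : IsPrimitiveRoot (q ^ 2) p)
    (hq0 : q ≠ 0) (hqp : q ^ p = (-1 : ℂ) ^ p') (t a : ℂ) (ht : t ≠ 0)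
    (ha2 : a ≠ 2) (ha2' : a ≠ -2) :
    ∏ j ∈ range p, (a * t + (q⁻¹) ^ (2 * j + 1) * t ^ 2 + q ^ (2 * j + 1))
      = t ^ p * (chebU (p + 1) - chebU (p - 1)).eval a
        - (-1 : ℂ) ^ (p + p') * (t ^ (2 * p) + 1) := by
  have hppos : 0 < p := by omega
  obtain ⟨y, hquad⟩ : ∃ y : ℂ, y ^ 2 - a * y + 1 = 0 := by
    obtain ⟨s, hs⟩ := IsAlgClosed.exists_pow_nat_eq (k := ℂ) (a ^ 2 - 4) (n := 2) (by norm_num)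
    exact ⟨(a + s) / 2, by linear_combination hs / 4⟩
  have hy : y ≠ 0 := by
    intro h; rw [h] at hquad; simp at hquad
  have hx : y + y⁻¹ = a := by
    field_simp
    linear_combination hquad
  have hyy : y * y⁻¹ = 1 := mul_inv_cancel₀ hy
  have hy1 : y ^ 2 ≠ 1 := by
    intro h
    have h2 : (y - 1) * (y + 1) = 0 := by linear_combination h
    rcases mul_eq_zero.mp h2 with h1 | h1
    · exact ha2 (by rw [← hx, show y = 1 by linear_combination h1]; norm_num)
    · exact ha2' (by rw [← hx, show y = -1 by linear_combination h1]; norm_num)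
  have hty : t * y ≠ 0 := mul_ne_zero ht hy
  have hε : ((-1 : ℂ)) ^ (p + p') * ((-1 : ℂ)) ^ (p + p') = 1 := by
    rw [← pow_add]; exact Even.neg_one_pow ⟨p + p', by ring⟩
  have hqinv : ((-1 : ℂ) ^ p')⁻¹ = (-1 : ℂ) ^ p' := by
    rw [← inv_pow]; norm_num
  -- rewrite each factor
  have hfac : ∀ j ∈ range p, a * t + (q⁻¹) ^ (2 * j + 1) * t ^ 2 + q ^ (2 * j + 1)
      = (t * y)⁻¹ * ((t * y + (q⁻¹) ^ (2 * j + 1) * t ^ 2) * (t * y + q ^ (2 * j + 1))) := by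
    intro j _
    have hq' : (q⁻¹) ^ (2 * j + 1) * q ^ (2 * j + 1) = 1 := by
      rw [← mul_pow, inv_mul_cancel₀ hq0, one_pow]
    rw [eq_comm, inv_mul_eq_iff_eq_mul₀ hty, ← hx]
    linear_combination t ^ 2 * hq' - t ^ 2 * hyy
  rw [Finset.prod_congr rfl hfac, Finset.prod_mul_distrib, Finset.prod_const, card_range,
    Finset.prod_mul_distrib]
  -- the two root-of-unity products
  have hA : ∏ j ∈ range p, (t * y + (q⁻¹) ^ (2 * j + 1) * t ^ 2)
      = (t * y) ^ p - (-1 : ℂ) ^ (p + p') * (t ^ 2) ^ p := by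
    have h1 : ∀ j ∈ range p, t * y + (q⁻¹) ^ (2 * j + 1) * t ^ 2
        = t * y - ((q ^ 2)⁻¹) ^ j * (-(q⁻¹ * t ^ 2)) := by
      intro j _
      rw [← inv_pow, ← pow_mul]
      rw [pow_add, pow_mul]
      ring
    have h2 : (-(q⁻¹ * t ^ 2)) ^ p = (-1 : ℂ) ^ (p + p') * (t ^ 2) ^ p := by
      rw [neg_pow, mul_pow, inv_pow, hqp, hqinv, pow_add]; ring
    rw [Finset.prod_congr rfl h1, prod_lin p hppos _ _ _ prim.inv, h2]
  have hB : ∏ j ∈ range p, (t * y + q ^ (2 * j + 1))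
      = (t * y) ^ p - (-1 : ℂ) ^ (p + p') := by
    have h1 : ∀ j ∈ range p, t * y + q ^ (2 * j + 1)
        = t * y - (q ^ 2) ^ j * (-q) := by
      intro j _
      rw [pow_add, pow_mul]
      ring
    have h3 : (-q) ^ p = (-1 : ℂ) ^ (p + p') := by
      rw [neg_pow, hqp, ← pow_add]
    rw [Finset.prod_congr rfl h1, prod_lin p hppos _ _ _ prim, h3]
  rw [hA, hB, ← hx, cheb_pair y hy hy1 p hp]
  have htyp : (t * y) ^ p ≠ 0 := pow_ne_zero _ hty
  have hYY : y ^ p * (y⁻¹) ^ p = 1 := by rw [← mul_pow, hyy, one_pow]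
  rw [inv_pow, inv_mul_eq_iff_eq_mul₀ htyp]
  linear_combination t ^ (2 * p) * hε - t ^ (2 * p) * hYY

lemma diamond (p p' : ℕ) (hp : 2 ≤ p) (q : ℂ) (prim : IsPrimitiveRoot (q ^ 2) p)
    (hq0 : q ≠ 0) (hqp : q ^ p = (-1 : ℂ) ^ p') :
    ∏ j ∈ range p,
      ((X : Polynomial (Polynomial ℂ)) * C X
        + C (C ((q⁻¹) ^ (2 * j + 1)) * X ^ 2)
        + C (C (q ^ (2 * j + 1)))) =
    C ((X : Polynomial ℂ) ^ p) * ((chebU (p + 1) - chebU (p - 1)).map C)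
      - C (C ((-1 : ℂ) ^ (p + p')) * ((X : Polynomial ℂ) ^ (2 * p) + 1)) := by
  apply eq_of_infinite_eval_eq
  apply Set.Infinite.mono (s := (fun a : ℂ => (C a : Polynomial ℂ)) '' {a | a ≠ 2 ∧ a ≠ -2})
  swap
  · apply Set.Infinite.image
    · exact fun x _ y _ h => C_injective h
    · have : {a : ℂ | a ≠ 2 ∧ a ≠ -2} = ({2, -2} : Set ℂ)ᶜ := by
        ext x; simp [not_or]
      rw [this]
      exact (Set.toFinite _).infinite_compl
  rintro _ ⟨a, ⟨ha2, ha2'⟩, rfl⟩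
  show eval (C a) _ = eval (C a) _
  apply eq_of_infinite_eval_eq
  apply Set.Infinite.mono (s := ({(0 : ℂ)} : Set ℂ)ᶜ)
  swap
  · exact (Set.toFinite _).infinite_compl
  intro t ht
  simp only [Set.mem_compl_iff, Set.mem_singleton_iff] at ht
  show eval t _ = eval t _
  have hmap : eval (C a) ((chebU (p + 1) - chebU (p - 1)).map C) = C ((chebU (p + 1) - chebU (p - 1)).eval a) := by
    rw [eval_map, eval₂_at_apply]
  simp only [eval_prod, eval_add, eval_mul, eval_pow, eval_C, eval_X, eval_sub, hmap]
  simpa using scalar_main p p' hp q prim hq0 hqp t a ht ha2 ha2'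

/-- ordered products of a sequence -/
def oprod {R : Type} [Ring R] (V : ℕ → R) : ℕ → ℕ → R
  | _, 0 => 1
  | a, (n + 1) => V a * oprod V (a + 1) n

lemma oprod_succ_right {R : Type} [Ring R] (V : ℕ → R) :
    ∀ (n a : ℕ), oprod V a (n + 1) = oprod V a n * V (a + n)
  | 0, a => by simp [oprod]
  | (n + 1), a => by
      have h1 : oprod V a (n + 1 + 1) = V a * oprod V (a + 1) (n + 1) := rfl
      have h2 : oprod V a (n + 1) = V a * oprod V (a + 1) n := rfl
      have h3 : a + 1 + n = a + (n + 1) := by omega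
      rw [h1, oprod_succ_right V n (a + 1), h2, mul_assoc, h3]

theorem abstract_cheb {R : Type} [Ring R] [Algebra ℂ R] (p p' : ℕ) (hp : 2 ≤ p) (q : ℂ)
    (prim : IsPrimitiveRoot (q ^ 2) p) (hq0 : q ≠ 0) (hq2 : q ^ 2 ≠ 1)
    (hqp : q ^ p = (-1 : ℂ) ^ p')
    (e f m m' : R) (hmm' : m * m' = 1) (hm'm : m' * m = 1) (hm2p : m ^ (2 * p) = 1)
    (hme : m * e = q ^ 2 • (e * m)) (hmf : m * f = (q ^ 2)⁻¹ • (f * m))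
    (hm'f : m' * f = q ^ 2 • (f * m'))
    (hef : e * f - f * e = (q - q⁻¹)⁻¹ • (m - m'))
    (hep : e ^ p = 0) :
    Polynomial.aeval (-(q • m') - q⁻¹ • m - ((q - q⁻¹) ^ 2) • (e * f))
        (chebU (p + 1) - chebU (p - 1))
      = ((-1 : ℂ) ^ (p + p') * 2) • m ^ p := by
  obtain ⟨β, hβdef⟩ : ∃ b : ℂ, b = q - q⁻¹ := ⟨_, rfl⟩
  rw [← hβdef] at hef ⊢
  have hβ : β ≠ 0 := by
    rw [hβdef]
    intro h
    apply hq2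
    have h2 : q = q⁻¹ := sub_eq_zero.mp h
    rw [pow_two]; nth_rewrite 2 [h2]; exact mul_inv_cancel₀ hq0
  have hq2' : (q ^ 2 : ℂ) ≠ 0 := pow_ne_zero _ hq0
  obtain ⟨Cas, hCasdef⟩ : ∃ c : R, c = -(q • m') - q⁻¹ • m - (β ^ 2) • (e * f) := ⟨_, rfl⟩
  rw [← hCasdef]
  have hβ2 : (β ^ 2 : ℂ) ≠ 0 := pow_ne_zero _ hβ
  have hβinv : (β : ℂ)⁻¹ = (β ^ 2)⁻¹ * β := by
    rw [pow_two, mul_inv, mul_assoc, inv_mul_cancel₀ hβ, mul_one]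
  have hx1 : q * (q ^ 2)⁻¹ = q⁻¹ := by
    rw [pow_two, mul_inv, ← mul_assoc, mul_inv_cancel₀ hq0, one_mul]
  have hx1' : q⁻¹ * q ^ 2 = q := by
    rw [pow_two, ← mul_assoc, inv_mul_cancel₀ hq0, one_mul]
  obtain ⟨r, hr0, hr, hrval⟩ : ∃ r : ℕ → ℂ, r 0 = 0 ∧
      (∀ j, (r j + β⁻¹) * (q ^ 2)⁻¹ = r (j + 1)) ∧
      (∀ j, -(β ^ 2) * r j = (q⁻¹) ^ (2 * j + 1) - q⁻¹) := by
    refine ⟨fun j => (β ^ 2)⁻¹ * (q⁻¹ - (q⁻¹) ^ (2 * j + 1)), by norm_num, fun j => ?_, fun j => ?_⟩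
    · have e1 : (β ^ 2)⁻¹ * (q⁻¹ - (q⁻¹) ^ (2 * j + 1)) + β⁻¹
          = (β ^ 2)⁻¹ * (q - (q⁻¹) ^ (2 * j + 1)) := by
        rw [hβinv, hβdef]; ring
      have hi : 2 * (j + 1) + 1 = (2 * j + 1) + 2 := by omega
      have hx2 : (q⁻¹) ^ (2 * j + 1) * (q ^ 2)⁻¹ = (q⁻¹) ^ (2 * (j + 1) + 1) := by
        rw [hi, pow_add, ← inv_pow]
        ring
      rw [e1, mul_assoc, sub_mul, hx1, hx2]
    · linear_combination ((q⁻¹) ^ (2 * j + 1) - q⁻¹) * mul_inv_cancel₀ hβ2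
  obtain ⟨sc, hsc0, hs, hscval⟩ : ∃ sc : ℕ → ℂ, sc 0 = 0 ∧
      (∀ j, (sc j - β⁻¹) * q ^ 2 = sc (j + 1)) ∧
      (∀ j, -(β ^ 2) * sc j = q ^ (2 * j + 1) - q) := by
    refine ⟨fun j => (β ^ 2)⁻¹ * (q - q ^ (2 * j + 1)), by norm_num, fun j => ?_, fun j => ?_⟩
    · have e1 : (β ^ 2)⁻¹ * (q - q ^ (2 * j + 1)) - β⁻¹
          = (β ^ 2)⁻¹ * (q⁻¹ - q ^ (2 * j + 1)) := by
        rw [hβinv, hβdef]; ring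
      have hi : 2 * (j + 1) + 1 = (2 * j + 1) + 2 := by omega
      have hx2 : q ^ (2 * j + 1) * q ^ 2 = q ^ (2 * (j + 1) + 1) := by
        rw [hi, pow_add]
        ring
      rw [e1, mul_assoc, sub_mul, hx1', hx2]
    · linear_combination (q ^ (2 * j + 1) - q) * mul_inv_cancel₀ hβ2
  obtain ⟨V, hVdef⟩ : ∃ v : ℕ → R, v = fun j => e * f + r j • m + sc j • m' := ⟨_, rfl⟩
  -- V j * f = f * V (j+1)
  have hefd : (e * f) * f = f * (e * f) + β⁻¹ • ((q ^ 2)⁻¹ • (f * m))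
      - β⁻¹ • (q ^ 2 • (f * m')) := by
    have h3 : (e * f) * f - f * (e * f) = (e * f - f * e) * f := by noncomm_ring
    have h2 : (e * f) * f - f * (e * f)
        = β⁻¹ • ((q ^ 2)⁻¹ • (f * m)) - β⁻¹ • (q ^ 2 • (f * m')) := by
      rw [h3, hef, smul_mul_assoc, sub_mul, hmf, hm'f, smul_sub]
    have h4 := sub_eq_iff_eq_add.mp h2
    rw [h4]; abel
  have hVf : ∀ j, V j * f = f * V (j + 1) := by
    intro j
    simp only [hVdef]
    rw [add_mul, add_mul, smul_mul_assoc, smul_mul_assoc, hefd, hmf, hm'f]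
    simp only [mul_add, mul_smul_comm]
    have hj : 1 + j = j + 1 := by omega
    match_scalars
    · ring
    · linear_combination hr j
    · linear_combination hs j
  have hPf : ∀ (n a : ℕ), oprod V a n * f = f * oprod V (a + 1) n := by
    intro n
    induction n with
    | zero => intro a; simp [oprod]
    | succ n ih =>
        intro a
        rw [show oprod V a (n + 1) = V a * oprod V (a + 1) n from rfl, mul_assoc, ih (a + 1),
          ← mul_assoc, hVf a, mul_assoc,
          show oprod V (a + 1) (n + 1) = V (a + 1) * oprod V (a + 2) n from rfl]
  have hV0 : V 0 = e * f := by
    simp only [hVdef, hr0, hsc0, zero_smul, add_zero]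
  have hEF : ∀ n, e ^ n * f ^ n = oprod V 0 n := by
    intro n
    induction n with
    | zero => simp [oprod]
    | succ n ih =>
        rw [pow_succ' e, pow_succ f, show e * e ^ n * (f ^ n * f) = e * ((e ^ n * f ^ n) * f) by
          noncomm_ring, ih, hPf n 0, ← mul_assoc,
          show oprod V 0 (n + 1) = V 0 * oprod V (0 + 1) n from rfl, hV0]
  have hP0 : oprod V 0 p = 0 := by rw [← hEF p, hep, zero_mul]
  -- commutation of m with everything
  have hcmu : m * (e * f) = (e * f) * m := by
    rw [← mul_assoc, hme, smul_mul_assoc, mul_assoc, hmf, mul_smul_comm, smul_smul,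
      mul_inv_cancel₀ hq2', one_smul, mul_assoc]
  have hCasm : Cas * m = m * Cas := by
    simp only [hCasdef, sub_mul, mul_sub, neg_mul, mul_neg, smul_mul_assoc, mul_smul_comm,
      hmm', hm'm, hcmu]
  have hmV : ∀ j, m * V j = V j * m := by
    intro j
    simp only [hVdef, mul_add, add_mul, mul_smul_comm, smul_mul_assoc, hcmu, hmm', hm'm]
  -- the evaluation ring hom
  have hcomm : ∀ g : Polynomial ℂ, Commute ((Polynomial.aeval m : Polynomial ℂ →ₐ[ℂ] R) g) Cas := by
    intro g
    induction g using Polynomial.induction_on with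
    | C a => simpa [Polynomial.aeval_C] using (show Commute ((algebraMap ℂ R) a) Cas from Algebra.commutes a Cas)
    | add g1 g2 h1 h2 => simpa [map_add] using h1.add_left h2
    | monomial n a ih =>
        have h1 : Commute ((algebraMap ℂ R) a) Cas := Algebra.commutes a Cas
        have hCm : Commute m Cas := hCasm.symm
        have h2 : Commute (m ^ (n + 1)) Cas := hCm.pow_left _
        simpa [map_mul, map_pow] using h1.mul_left h2
  set φ : Polynomial ℂ →+* R := (Polynomial.aeval m : Polynomial ℂ →ₐ[ℂ] R).toRingHom with hφdef
  set Ψ : Polynomial (Polynomial ℂ) →+* R :=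
    Polynomial.eval₂RingHom' φ Cas (fun g => hcomm g) with hΨdef
  have hΨap : ∀ g, Ψ g = Polynomial.eval₂ φ Cas g := fun g => rfl
  have hΨX : Ψ X = Cas := by rw [hΨap, Polynomial.eval₂_X]
  have hΨC : ∀ g : Polynomial ℂ, Ψ (C g) = Polynomial.aeval m g := by
    intro g
    rw [hΨap, Polynomial.eval₂_C]
    rfl
  -- image of each factor
  have hΨF : ∀ j, Ψ ((X : Polynomial (Polynomial ℂ)) * C X
        + C (C ((q⁻¹) ^ (2 * j + 1)) * X ^ 2)
        + C (C (q ^ (2 * j + 1))))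
      = (-(β ^ 2)) • (V j * m) := by
    intro j
    simp only [map_add, map_mul, hΨX, hΨC, Polynomial.aeval_X, Polynomial.aeval_C,
      Polynomial.aeval_X_pow]
    rw [Algebra.algebraMap_eq_smul_one (q ^ (2 * j + 1))]
    have hmm2 : m * m = m ^ 2 := (pow_two m).symm
    have hCm2 : Cas * m = (-q) • (1 : R) + (-q⁻¹) • m ^ 2 + (-(β ^ 2)) • ((e * f) * m) := by
      rw [hCasdef, sub_mul, sub_mul, neg_mul, smul_mul_assoc, smul_mul_assoc, smul_mul_assoc,
        hm'm, hmm2]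
      module
    have hVm : V j * m = ((e * f) * m) + r j • m ^ 2 + sc j • (1 : R) := by
      rw [hVdef]
      beta_reduce
      rw [add_mul, add_mul, smul_mul_assoc, smul_mul_assoc, hm'm, hmm2]
    rw [hCm2, hVm, ← Algebra.smul_def]
    match_scalars
    · linear_combination -hscval j
    · linear_combination -hrval j
    · ring
  have hΨprod : ∀ n, Ψ (∏ j ∈ range n, ((X : Polynomial (Polynomial ℂ)) * C X
        + C (C ((q⁻¹) ^ (2 * j + 1)) * X ^ 2)
        + C (C (q ^ (2 * j + 1)))))
      = (-(β ^ 2)) ^ n • (oprod V 0 n * m ^ n) := by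
    intro n
    induction n with
    | zero => simp [show oprod V 0 0 = 1 from rfl]
    | succ n ih =>
        rw [prod_range_succ, map_mul, ih, hΨF n]
        have hc : Commute m (V n) := hmV n
        have hpow : m ^ n * V n = V n * m ^ n := (hc.pow_left n).eq
        have key : oprod V 0 n * m ^ n * (V n * m) = oprod V 0 (n + 1) * m ^ (n + 1) := by
          calc oprod V 0 n * m ^ n * (V n * m) = oprod V 0 n * (m ^ n * V n) * m := by
                noncomm_ring
            _ = oprod V 0 n * (V n * m ^ n) * m := by rw [hpow]
            _ = (oprod V 0 n * V n) * (m ^ n * m) := by noncomm_ring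
            _ = oprod V 0 (n + 1) * m ^ (n + 1) := by
                rw [← pow_succ, oprod_succ_right V n 0, Nat.zero_add]
        rw [smul_mul_assoc, mul_smul_comm, smul_smul, key, pow_succ (-(β ^ 2)) n]
  -- apply Ψ to the diamond identity
  have key := congrArg Ψ (diamond p p' hp q prim hq0 hqp)
  rw [hΨprod p, hP0, zero_mul, smul_zero] at key
  have hUmap : Ψ ((chebU (p + 1) - chebU (p - 1)).map C)
      = Polynomial.aeval Cas (chebU (p + 1) - chebU (p - 1)) := by
    rw [hΨap, Polynomial.eval₂_map, Polynomial.aeval_def]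
    have hcomp : φ.comp (Polynomial.C : ℂ →+* Polynomial ℂ) = algebraMap ℂ R := by
      ext a
      simp [hφdef]
    rw [hcomp]
  rw [map_sub, map_mul] at key
  simp only [hΨC, hUmap, map_mul, map_add, map_one, Polynomial.aeval_X,
    Polynomial.aeval_C, Polynomial.aeval_X_pow, hm2p] at key
  -- now: 0 = m^p * T - algebraMap ((-1)^(p+p')) * (1 + 1)
  have hfin : m ^ p * Polynomial.aeval Cas (chebU (p + 1) - chebU (p - 1))
      = ((-1 : ℂ) ^ (p + p') * 2) • (1 : R) := by
    have h1 := sub_eq_zero.mp key.symm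
    rw [h1, ← Algebra.smul_def]
    rw [show ((1 : R) + 1) = (2 : ℂ) • (1 : R) from by rw [two_smul], smul_smul]
  set T := Polynomial.aeval Cas (chebU (p + 1) - chebU (p - 1)) with hT
  have hcm'm : Commute m' m := by
    unfold Commute SemiconjBy
    rw [hm'm, hmm']
  have h1 : m' ^ p * m ^ p = 1 := by rw [← hcm'm.mul_pow, hm'm, one_pow]
  have hm2p' : m ^ p * m ^ p = 1 := by rw [← pow_add, ← two_mul, hm2p]
  have hm'p : m' ^ p = m ^ p := by
    calc m' ^ p = m' ^ p * (m ^ p * m ^ p) := by rw [hm2p', mul_one]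
      _ = (m' ^ p * m ^ p) * m ^ p := by rw [mul_assoc]
      _ = m ^ p := by rw [h1, one_mul]
  calc T = (m' ^ p * m ^ p) * T := by rw [h1, one_mul]
    _ = m' ^ p * (m ^ p * T) := by rw [mul_assoc]
    _ = m' ^ p * (((-1 : ℂ) ^ (p + p') * 2) • 1) := by rw [hfin]
    _ = ((-1 : ℂ) ^ (p + p') * 2) • m' ^ p := by rw [mul_smul_comm, mul_one]
    _ = ((-1 : ℂ) ^ (p + p') * 2) • m ^ p := by rw [hm'p]

end ChebyshevCasimirAux

section ChebyshevCasimirAux2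

variable {R : Type} [Ring R] [Algebra ℂ R]

lemma pow_comm_smul (a : ℂ) (k x : R) (h : k * x = a • (x * k)) :
    ∀ n : ℕ, k ^ n * x = a ^ n • (x * k ^ n)
  | 0 => by simp
  | (n + 1) => by
      have ih := pow_comm_smul a k x h n
      calc k ^ (n + 1) * x = k * (k ^ n * x) := by
            rw [pow_succ']
            rw [mul_assoc]
        _ = k * (a ^ n • (x * k ^ n)) := by rw [ih]
        _ = a ^ n • ((k * x) * k ^ n) := by
            rw [mul_smul_comm, mul_assoc]
        _ = a ^ n • ((a • (x * k)) * k ^ n) := by rw [h]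
        _ = a ^ (n + 1) • (x * k ^ (n + 1)) := by
            rw [smul_mul_assoc, smul_smul, mul_assoc, ← pow_succ, ← pow_succ']

/-- The main computation, done once for each of the two "sides". -/
lemma qg_main (p p' : ℕ) (hp : 2 ≤ p) (hp' : 2 ≤ p') (hco' : Nat.Coprime p' p)
    (κ e f : R)
    (hκN : κ ^ (2 * p * p') = 1)
    (hKe : κ * e = algebraMap ℂ R (rootOfUnity p ^ 2) * (e * κ))
    (hKf : κ * f = algebraMap ℂ R ((rootOfUnity p ^ 2)⁻¹) * (f * κ))
    (hefr : e * f - f * e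
      = algebraMap ℂ R ((rootOfUnity p ^ p' - (rootOfUnity p ^ p')⁻¹)⁻¹)
          * (κ ^ p' - κ ^ (2 * p * p' - p')))
    (hep : e ^ p = 0) :
    Polynomial.aeval
        (-(algebraMap ℂ R (rootOfUnity p ^ p') * κ ^ (2 * p * p' - p'))
          - algebraMap ℂ R ((rootOfUnity p ^ p')⁻¹) * κ ^ p'
          - algebraMap ℂ R ((rootOfUnity p ^ p' - (rootOfUnity p ^ p')⁻¹) ^ 2) * (e * f))
        (chebU (p + 1) - chebU (p - 1))
      = algebraMap ℂ R ((-1 : ℂ) ^ (p + p') * 2) * κ ^ (p * p') := by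
  have hp0 : (p : ℂ) ≠ 0 := Nat.cast_ne_zero.mpr (by omega)
  set q₀ : ℂ := rootOfUnity p with hq₀def
  have hq₀0 : q₀ ≠ 0 := Complex.exp_ne_zero _
  have hq₀p : q₀ ^ p = -1 := by
    rw [hq₀def, rootOfUnity, ← Complex.exp_nat_mul]
    rw [show (p : ℂ) * (Real.pi * Complex.I / p) = Real.pi * Complex.I by field_simp]
    exact Complex.exp_pi_mul_I
  have hq₀sq : q₀ ^ 2 = Complex.exp (2 * Real.pi * Complex.I / p) := by
    rw [hq₀def, rootOfUnity, ← Complex.exp_nat_mul]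
    norm_num
    ring_nf
  set q : ℂ := q₀ ^ p' with hqdef
  have hq0 : q ≠ 0 := pow_ne_zero _ hq₀0
  have hqsq : q ^ 2 = (q₀ ^ 2) ^ p' := by
    rw [hqdef, ← pow_mul, ← pow_mul, mul_comm]
  have prim : IsPrimitiveRoot (q ^ 2) p := by
    rw [hqsq, hq₀sq]
    exact (Complex.isPrimitiveRoot_exp p (by omega)).pow_of_coprime p' hco'
  have hq2 : q ^ 2 ≠ 1 := prim.ne_one (by omega)
  have hqp : q ^ p = (-1 : ℂ) ^ p' := by
    rw [hqdef, ← pow_mul, mul_comm, pow_mul, hq₀p]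
  -- elements
  have hple : p' ≤ 2 * p * p' := Nat.le_mul_of_pos_left p' (by positivity)
  set m : R := κ ^ p' with hmdef
  set m' : R := κ ^ (2 * p * p' - p') with hm'def
  have hmm' : m * m' = 1 := by
    rw [hmdef, hm'def, ← pow_add, show p' + (2 * p * p' - p') = 2 * p * p' by omega, hκN]
  have hm'm : m' * m = 1 := by
    rw [hmdef, hm'def, ← pow_add, show (2 * p * p' - p') + p' = 2 * p * p' by omega, hκN]
  have hm2p : m ^ (2 * p) = 1 := by
    rw [hmdef, ← pow_mul, show p' * (2 * p) = 2 * p * p' by ring, hκN]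
  have hKe' : κ * e = (q₀ ^ 2) • (e * κ) := by rw [hKe, Algebra.smul_def]
  have hKf' : κ * f = ((q₀ ^ 2)⁻¹) • (f * κ) := by rw [hKf, Algebra.smul_def]
  have hme : m * e = q ^ 2 • (e * m) := by
    rw [hmdef, pow_comm_smul _ _ _ hKe' p', ← hqsq]
  have hmf : m * f = (q ^ 2)⁻¹ • (f * m) := by
    rw [hmdef, pow_comm_smul _ _ _ hKf' p', inv_pow, ← hqsq]
  have hq₀N : (q₀ ^ 2) ^ (2 * p * p' - p') = (q ^ 2)⁻¹ := by
    apply eq_inv_of_mul_eq_one_left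
    rw [hqsq, ← pow_add, show 2 * p * p' - p' + p' = 2 * p * p' by omega]
    rw [← pow_mul, show 2 * (2 * p * p') = p * (4 * p') by ring, pow_mul, hq₀p]
    rw [show (4 : ℕ) * p' = 2 * (2 * p') by ring, pow_mul]
    norm_num
  have hm'f : m' * f = q ^ 2 • (f * m') := by
    rw [hm'def, pow_comm_smul _ _ _ hKf' _, inv_pow, hq₀N, inv_inv]
  have hef : e * f - f * e = (q - q⁻¹)⁻¹ • (m - m') := by
    rw [hefr, Algebra.smul_def, hmdef, hm'def, hqdef]
  have hepf : e ^ p = 0 := hep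
  have main := abstract_cheb p p' hp q prim hq0 hq2 hqp e f m m' hmm' hm'm hm2p
    hme hmf hm'f hef hepf
  have hCas : -(q • m') - q⁻¹ • m - ((q - q⁻¹) ^ 2) • (e * f)
      = -(algebraMap ℂ R (rootOfUnity p ^ p') * κ ^ (2 * p * p' - p'))
          - algebraMap ℂ R ((rootOfUnity p ^ p')⁻¹) * κ ^ p'
          - algebraMap ℂ R ((rootOfUnity p ^ p' - (rootOfUnity p ^ p')⁻¹) ^ 2) * (e * f) := by
    rw [Algebra.smul_def, Algebra.smul_def, Algebra.smul_def]
  rw [hCas] at main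
  rw [main, hmdef, ← pow_mul, show p' * p = p * p' by ring, Algebra.smul_def]

end ChebyshevCasimirAux2

/-- Evaluating Chebyshev polynomials at the Casimir elements:
`U_{p₊+1}(C₊) − U_{p₊−1}(C₊) = (−1)^{p₊+p₋}·2·K^{p₊p₋} = U_{p₋+1}(C₋) − U_{p₋−1}(C₋)`. -/
theorem chebyshev_casimir (pp pm : ℕ) (hpp : 2 ≤ pp) (hpm : 2 ≤ pm)
    (hco : Nat.Coprime pp pm) :
    Polynomial.aeval (CasP pp pm) (chebU (pp + 1) - chebU (pp - 1)) =
        algebraMap ℂ (QG pp pm) ((-1 : ℂ) ^ (pp + pm) * 2) * gen pp pm K ^ (pp * pm) ∧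
    Polynomial.aeval (CasM pp pm) (chebU (pm + 1) - chebU (pm - 1)) =
        algebraMap ℂ (QG pp pm) ((-1 : ℂ) ^ (pp + pm) * 2) * gen pp pm K ^ (pp * pm) := by
  have hκN : gen pp pm K ^ (2 * pp * pm) = 1 := by
    have h := RingQuot.mkAlgHom_rel ℂ (QGRel.KOrd (pp := pp) (pm := pm))
    simpa [gen, map_pow] using h
  constructor
  · have hKe : gen pp pm K * gen pp pm Ep
        = algebraMap ℂ (QG pp pm) (rootOfUnity pp ^ 2) * (gen pp pm Ep * gen pp pm K) := by
      have h := RingQuot.mkAlgHom_rel ℂ (QGRel.KEp (pp := pp) (pm := pm))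
      simpa [gen, map_mul] using h
    have hKf : gen pp pm K * gen pp pm Fp
        = algebraMap ℂ (QG pp pm) ((rootOfUnity pp ^ 2)⁻¹) * (gen pp pm Fp * gen pp pm K) := by
      have h := RingQuot.mkAlgHom_rel ℂ (QGRel.KFp (pp := pp) (pm := pm))
      simpa [gen, map_mul] using h
    have hefr : gen pp pm Ep * gen pp pm Fp - gen pp pm Fp * gen pp pm Ep
        = algebraMap ℂ (QG pp pm) ((rootOfUnity pp ^ pm - (rootOfUnity pp ^ pm)⁻¹)⁻¹)
            * (gen pp pm K ^ pm - gen pp pm K ^ (2 * pp * pm - pm)) := by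
      have h := RingQuot.mkAlgHom_rel ℂ (QGRel.EpFp (pp := pp) (pm := pm))
      simpa [gen, map_mul, map_sub, map_pow] using h
    have hep : gen pp pm Ep ^ pp = 0 := by
      have h := RingQuot.mkAlgHom_rel ℂ (QGRel.EpNil (pp := pp) (pm := pm))
      simpa [gen, map_pow] using h
    exact qg_main pp pm hpp hpm hco.symm (gen pp pm K) (gen pp pm Ep) (gen pp pm Fp)
      hκN hKe hKf hefr hep
  · have hNN : 2 * pm * pp = 2 * pp * pm := by ring
    have hKe : gen pp pm K * gen pp pm Em
        = algebraMap ℂ (QG pp pm) (rootOfUnity pm ^ 2) * (gen pp pm Em * gen pp pm K) := by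
      have h := RingQuot.mkAlgHom_rel ℂ (QGRel.KEm (pp := pp) (pm := pm))
      simpa [gen, map_mul] using h
    have hKf : gen pp pm K * gen pp pm Fm
        = algebraMap ℂ (QG pp pm) ((rootOfUnity pm ^ 2)⁻¹) * (gen pp pm Fm * gen pp pm K) := by
      have h := RingQuot.mkAlgHom_rel ℂ (QGRel.KFm (pp := pp) (pm := pm))
      simpa [gen, map_mul] using h
    have hefr : gen pp pm Em * gen pp pm Fm - gen pp pm Fm * gen pp pm Em
        = algebraMap ℂ (QG pp pm) ((rootOfUnity pm ^ pp - (rootOfUnity pm ^ pp)⁻¹)⁻¹)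
            * (gen pp pm K ^ pp - gen pp pm K ^ (2 * pm * pp - pp)) := by
      rw [hNN]
      have h := RingQuot.mkAlgHom_rel ℂ (QGRel.EmFm (pp := pp) (pm := pm))
      simpa [gen, map_mul, map_sub, map_pow] using h
    have hep : gen pp pm Em ^ pm = 0 := by
      have h := RingQuot.mkAlgHom_rel ℂ (QGRel.EmNil (pp := pp) (pm := pm))
      simpa [gen, map_pow] using h
    have hκN' : gen pp pm K ^ (2 * pm * pp) = 1 := by rw [hNN]; exact hκN
    have main := qg_main pm pp hpm hpp hco (gen pp pm K) (gen pp pm Em) (gen pp pm Fm)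
      hκN' hKe hKf hefr hep
    rw [hNN] at main
    rw [show CasM pp pm
        = -(algebraMap ℂ (QG pp pm) (rootOfUnity pm ^ pp) * gen pp pm K ^ (2 * pp * pm - pp))
          - algebraMap ℂ (QG pp pm) ((rootOfUnity pm ^ pp)⁻¹) * gen pp pm K ^ pp
          - algebraMap ℂ (QG pp pm) ((rootOfUnity pm ^ pp - (rootOfUnity pm ^ pp)⁻¹) ^ 2)
              * (gen pp pm Em * gen pp pm Fm) from rfl]
    rw [main, Nat.add_comm pm pp, Nat.mul_comm pm pp]
end
end

section
/- The element Λ := F₊^{p₊−1}·E₊^{p₊−1}·F₋^{p₋−1}·E₋^{p₋−1}·(Σ_{n=0}^{2p₊p₋−1} K^n) of g_{p₊,p₋} satisfies K·Λ = Λ·K = Λ and E₊·Λ = Λ·E₊ = F₊·Λ = Λ·F₊ = E₋·Λ = Λ·E₋ = F₋·Λ = Λ·F₋ = 0; that is, Λ is a two-sided cointegral: x·Λ = Λ·x = ε(x)·Λ for every x, where ε is the algebra homomorphism g → ℂ with ε(K) = 1 and ε(E₊) = ε(F₊) = ε(E₋) = ε(F₋) = 0. -/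
noncomputable section

open FreeAlgebra QGGen

/-- The cointegral `Λ` of `g_{p₊,p₋}`. -/
def cointegral (pp pm : ℕ) : QG pp pm :=
  gen pp pm Fp ^ (pp - 1) * gen pp pm Ep ^ (pp - 1) *
    gen pp pm Fm ^ (pm - 1) * gen pp pm Em ^ (pm - 1) *
    (∑ n ∈ Finset.range (2 * pp * pm), gen pp pm K ^ n)


section CointegralAux

namespace QGAux

lemma root_ne_zero (p : ℕ) : rootOfUnity p ≠ 0 := Complex.exp_ne_zero _

lemma root_pow_two_mul_self {p : ℕ} (hp : p ≠ 0) : rootOfUnity p ^ (2 * p) = 1 := by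
  rw [rootOfUnity, ← Complex.exp_nat_mul]
  have hpc : (p : ℂ) ≠ 0 := Nat.cast_ne_zero.mpr hp
  have he : ((2 * p : ℕ) : ℂ) * (↑Real.pi * Complex.I / ↑p) = 2 * ↑Real.pi * Complex.I := by
    push_cast
    field_simp
  rw [he, Complex.exp_two_pi_mul_I]

variable {A : Type*} [Ring A] [Algebra ℂ A]


lemma swap_pow {x y : A} {c : ℂ} (h : x * y = c • (y * x)) :
    ∀ n : ℕ, x ^ n * y = c ^ n • (y * x ^ n)
  | 0 => by simp
  | n + 1 => by
    calc x ^ (n + 1) * y = x ^ n * (x * y) := by rw [pow_succ, mul_assoc]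
      _ = c • ((x ^ n * y) * x) := by rw [h, mul_smul_comm, mul_assoc]
      _ = c • ((c ^ n • (y * x ^ n)) * x) := by rw [swap_pow h n]
      _ = c ^ (n + 1) • (y * x ^ (n + 1)) := by
            rw [smul_mul_assoc, smul_smul, mul_assoc, ← pow_succ, ← pow_succ']

lemma swap_pow' {x y : A} {c : ℂ} (h : x * y = c • (y * x)) :
    ∀ n : ℕ, x * y ^ n = c ^ n • (y ^ n * x)
  | 0 => by simp
  | n + 1 => by
    calc x * y ^ (n + 1) = (x * y ^ n) * y := by rw [pow_succ, mul_assoc]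
      _ = (c ^ n • (y ^ n * x)) * y := by rw [swap_pow' h n]
      _ = c ^ n • (y ^ n * (x * y)) := by rw [smul_mul_assoc, mul_assoc]
      _ = c ^ (n + 1) • (y ^ (n + 1) * x) := by
            rw [h, mul_smul_comm, smul_smul, ← mul_assoc, ← pow_succ, ← pow_succ]


lemma sector_comm_left {e f k1 k2 : A} {u d : ℂ}
    (h2 : k1 * f = u⁻¹ • (f * k1)) (h4 : k2 * f = u • (f * k2))
    (hef : e * f = f * e + d • k1 - d • k2) :
    ∀ n : ℕ, e * f ^ (n + 1) = f ^ (n + 1) * e +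
      f ^ n * ((d * ∑ j ∈ Finset.range (n + 1), (u⁻¹) ^ j) • k1
        - (d * ∑ j ∈ Finset.range (n + 1), u ^ j) • k2)
  | 0 => by simpa [add_sub_assoc] using hef
  | n + 1 => by
    have ih := sector_comm_left h2 h4 hef n
    have hA : d * ∑ j ∈ Finset.range (n + 2), (u⁻¹) ^ j
        = d + u⁻¹ * (d * ∑ j ∈ Finset.range (n + 1), (u⁻¹) ^ j) := by
      rw [geom_sum_succ]; ring
    have hB : d * ∑ j ∈ Finset.range (n + 2), u ^ j
        = d + u * (d * ∑ j ∈ Finset.range (n + 1), u ^ j) := by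
      rw [geom_sum_succ]; ring
    rw [hA, hB]
    have e1 : e * f ^ (n + 2) = (e * f ^ (n + 1)) * f := by rw [pow_succ, mul_assoc]
    rw [e1, ih, add_mul]
    simp only [mul_assoc, sub_mul, smul_mul_assoc, hef, h2, h4]
    simp only [mul_add, mul_sub, mul_smul_comm, smul_smul, smul_sub, smul_add]
    simp only [← mul_assoc, ← pow_succ]
    module

lemma sector_comm_right {e f k1 k2 : A} {u d : ℂ} (hu : u ≠ 0)
    (h1 : k1 * e = u • (e * k1)) (h3 : k2 * e = u⁻¹ • (e * k2))
    (hef : e * f = f * e + d • k1 - d • k2) :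
    ∀ n : ℕ, e ^ (n + 1) * f = f * e ^ (n + 1) +
      ((d * ∑ j ∈ Finset.range (n + 1), (u⁻¹) ^ j) • k1
        - (d * ∑ j ∈ Finset.range (n + 1), u ^ j) • k2) * e ^ n
  | 0 => by simpa [sub_mul, add_sub_assoc] using hef
  | n + 1 => by
    have ih := sector_comm_right hu h1 h3 hef n
    have h1' : e * k1 = u⁻¹ • (k1 * e) := by
      rw [h1, smul_smul, inv_mul_cancel₀ hu, one_smul]
    have h3' : e * k2 = u • (k2 * e) := by
      rw [h3, smul_smul, mul_inv_cancel₀ hu, one_smul]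
    have hA : d * ∑ j ∈ Finset.range (n + 2), (u⁻¹) ^ j
        = d + u⁻¹ * (d * ∑ j ∈ Finset.range (n + 1), (u⁻¹) ^ j) := by
      rw [geom_sum_succ]; ring
    have hB : d * ∑ j ∈ Finset.range (n + 2), u ^ j
        = d + u * (d * ∑ j ∈ Finset.range (n + 1), u ^ j) := by
      rw [geom_sum_succ]; ring
    rw [hA, hB]
    have e1 : e ^ (n + 2) * f = e * (e ^ (n + 1) * f) := by
      rw [pow_succ', mul_assoc]
    rw [e1, ih]
    simp only [mul_add, sub_mul, smul_mul_assoc, mul_sub, mul_smul_comm]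
    simp only [← mul_assoc, hef, h1', h3']
    simp only [add_mul, sub_mul, smul_mul_assoc, smul_smul, mul_assoc, ← pow_succ']
    module

lemma comm_mul_pow {x y : A} (h : x * y = y * x) : ∀ n : ℕ, x * y ^ n = y ^ n * x
  | 0 => by simp
  | n + 1 => by
    rw [pow_succ, ← mul_assoc, comm_mul_pow h n, mul_assoc, h, ← mul_assoc]


lemma sector_scalar {u d : ℂ} (hu : u ≠ 0) {p : ℕ} (hp : 2 ≤ p) (hup : u ^ p = 1) :
    u ^ (p - 1) * (d * ∑ j ∈ Finset.range (p - 1), (u⁻¹) ^ j)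
      = (u⁻¹) ^ (p - 1) * (d * ∑ j ∈ Finset.range (p - 1), u ^ j) := by
  have ha : p - 1 + 1 = p := by omega
  have hinv : (u⁻¹) ^ (p - 1) = u := by
    have h1 : u ^ (p - 1) * u = 1 := by rw [← pow_succ, ha, hup]
    rw [inv_pow, eq_inv_of_mul_eq_one_left h1, inv_inv]
  have hL : u ^ (p - 1) * (d * ∑ j ∈ Finset.range (p - 1), (u⁻¹) ^ j)
      = d * ∑ j ∈ Finset.range (p - 1), u ^ (p - 1 - j) := by
    rw [mul_left_comm (u ^ (p - 1)) d, Finset.mul_sum]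
    congr 1
    refine Finset.sum_congr rfl fun j hj => ?_
    have hj' : j < p - 1 := Finset.mem_range.mp hj
    have hsplit : u ^ (p - 1) = u ^ (p - 1 - j) * u ^ j := by
      rw [← pow_add]; congr 1; omega
    rw [hsplit, mul_assoc, inv_pow, mul_inv_cancel₀ (pow_ne_zero _ hu), mul_one]
  have hR : (u⁻¹) ^ (p - 1) * (d * ∑ j ∈ Finset.range (p - 1), u ^ j)
      = d * ∑ j ∈ Finset.range (p - 1), u ^ (j + 1) := by
    rw [hinv, mul_left_comm u d, Finset.mul_sum]
    congr 1
    exact Finset.sum_congr rfl fun j _ => (pow_succ' u j).symm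
  rw [hL, hR]
  congr 1
  rw [← Finset.sum_range_reflect (fun j => u ^ (j + 1)) (p - 1)]
  refine Finset.sum_congr rfl fun j hj => ?_
  have hj' : j < p - 1 := Finset.mem_range.mp hj
  congr 1
  omega

lemma sector_kill_left {e f k1 k2 : A} {u d : ℂ} {p : ℕ}
    (hp : 2 ≤ p) (hu : u ≠ 0) (hup : u ^ p = 1)
    (h1 : k1 * e = u • (e * k1)) (h2 : k1 * f = u⁻¹ • (f * k1))
    (h3 : k2 * e = u⁻¹ • (e * k2)) (h4 : k2 * f = u • (f * k2))
    (hef : e * f = f * e + d • k1 - d • k2) (hep : e ^ p = 0)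
    {Z : A} (hZ : k1 * Z = k2 * Z) :
    e * (f ^ (p - 1) * (e ^ (p - 1) * Z)) = 0 := by
  obtain ⟨n, hn⟩ : ∃ n, p - 1 = n + 1 := ⟨p - 2, by omega⟩
  have hcl : e * f ^ (p - 1) = f ^ (p - 1) * e + f ^ n *
      ((d * ∑ j ∈ Finset.range (p - 1), (u⁻¹) ^ j) • k1
        - (d * ∑ j ∈ Finset.range (p - 1), u ^ j) • k2) := by
    rw [hn]; exact sector_comm_left h2 h4 hef n
  have hee : e * (e ^ (p - 1) * Z) = 0 := by
    rw [← mul_assoc, ← pow_succ', show p - 1 + 1 = p by omega, hep, zero_mul]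
  have hswap1 : k1 * (e ^ (p - 1) * Z) = u ^ (p - 1) • (e ^ (p - 1) * (k2 * Z)) := by
    rw [← mul_assoc, swap_pow' h1 (p - 1), smul_mul_assoc, mul_assoc, hZ]
  have hswap2 : k2 * (e ^ (p - 1) * Z) = (u⁻¹) ^ (p - 1) • (e ^ (p - 1) * (k2 * Z)) := by
    rw [← mul_assoc, swap_pow' h3 (p - 1), smul_mul_assoc, mul_assoc]
  have hzero : (d * ∑ j ∈ Finset.range (p - 1), (u⁻¹) ^ j) * u ^ (p - 1)
      - (d * ∑ j ∈ Finset.range (p - 1), u ^ j) * (u⁻¹) ^ (p - 1) = 0 := by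
    linear_combination sector_scalar hu hp hup (d := d)
  calc e * (f ^ (p - 1) * (e ^ (p - 1) * Z))
      = (e * f ^ (p - 1)) * (e ^ (p - 1) * Z) := by rw [mul_assoc]
    _ = f ^ (p - 1) * (e * (e ^ (p - 1) * Z)) + f ^ n *
        (((d * ∑ j ∈ Finset.range (p - 1), (u⁻¹) ^ j) • k1
          - (d * ∑ j ∈ Finset.range (p - 1), u ^ j) • k2) * (e ^ (p - 1) * Z)) := by
        rw [hcl, add_mul, mul_assoc, mul_assoc]
    _ = f ^ n *
        (((d * ∑ j ∈ Finset.range (p - 1), (u⁻¹) ^ j) * u ^ (p - 1)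
          - (d * ∑ j ∈ Finset.range (p - 1), u ^ j) * (u⁻¹) ^ (p - 1)) •
            (e ^ (p - 1) * (k2 * Z))) := by
        rw [hee, mul_zero, zero_add, sub_mul, smul_mul_assoc, smul_mul_assoc,
          hswap1, hswap2, smul_smul, smul_smul, ← sub_smul]
    _ = 0 := by rw [hzero, zero_smul, mul_zero]

lemma sector_kill_right {e f k1 k2 : A} {u d : ℂ} {p : ℕ}
    (hp : 2 ≤ p) (hu : u ≠ 0) (hup : u ^ p = 1)
    (h1 : k1 * e = u • (e * k1)) (h3 : k2 * e = u⁻¹ • (e * k2))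
    (hef : e * f = f * e + d • k1 - d • k2) (hfp : f ^ p = 0)
    {W : A} (hW1 : k1 * W = u • W) (hW2 : k2 * W = u⁻¹ • W) :
    f ^ (p - 1) * ((e ^ (p - 1) * f) * W) = 0 := by
  obtain ⟨n, hn⟩ : ∃ n, p - 1 = n + 1 := ⟨p - 2, by omega⟩
  have hcr : e ^ (p - 1) * f = f * e ^ (p - 1) +
      ((d * ∑ j ∈ Finset.range (p - 1), (u⁻¹) ^ j) • k1
        - (d * ∑ j ∈ Finset.range (p - 1), u ^ j) • k2) * e ^ n := by
    rw [hn]; exact sector_comm_right hu h1 h3 hef n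
  have h0 : f ^ (p - 1) * ((f * e ^ (p - 1)) * W) = 0 := by
    rw [← mul_assoc, ← mul_assoc, ← pow_succ, show p - 1 + 1 = p by omega, hfp,
      zero_mul, zero_mul]
  have t1 : k1 * (e ^ n * W) = (u ^ n * u) • (e ^ n * W) := by
    rw [← mul_assoc, swap_pow' h1 n, smul_mul_assoc, mul_assoc, hW1, mul_smul_comm, smul_smul]
  have t2 : k2 * (e ^ n * W) = ((u⁻¹) ^ n * u⁻¹) • (e ^ n * W) := by
    rw [← mul_assoc, swap_pow' h3 n, smul_mul_assoc, mul_assoc, hW2, mul_smul_comm, smul_smul]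
  have hscal : (d * ∑ j ∈ Finset.range (p - 1), (u⁻¹) ^ j) * (u ^ n * u)
      - (d * ∑ j ∈ Finset.range (p - 1), u ^ j) * ((u⁻¹) ^ n * u⁻¹) = 0 := by
    have e1 : u ^ n * u = u ^ (p - 1) := by rw [← pow_succ, hn]
    have e2 : (u⁻¹) ^ n * u⁻¹ = (u⁻¹) ^ (p - 1) := by rw [← pow_succ, hn]
    rw [e1, e2]
    linear_combination sector_scalar hu hp hup (d := d)
  have inner : (((d * ∑ j ∈ Finset.range (p - 1), (u⁻¹) ^ j) • k1
      - (d * ∑ j ∈ Finset.range (p - 1), u ^ j) • k2) * e ^ n) * W = 0 := by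
    rw [sub_mul, smul_mul_assoc, smul_mul_assoc, sub_mul, smul_mul_assoc, smul_mul_assoc,
      mul_assoc, mul_assoc, t1, t2, smul_smul, smul_smul, ← sub_smul, hscal, zero_smul]
  rw [hcr, add_mul, mul_add, h0, zero_add, inner, mul_zero]

section Group
variable {k : A} {N : ℕ}

lemma k_mul_S (hk : k ^ N = 1) :
    k * (∑ n ∈ Finset.range N, k ^ n) = ∑ n ∈ Finset.range N, k ^ n := by
  rw [Finset.mul_sum]
  have h1 := Finset.sum_range_succ (fun n => k ^ n) N
  have h2 := Finset.sum_range_succ' (fun n => k ^ n) N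
  have step : (∑ n ∈ Finset.range N, k * k ^ n) = ∑ n ∈ Finset.range N, k ^ (n + 1) :=
    Finset.sum_congr rfl fun n _ => (pow_succ' k n).symm
  rw [step]
  have e := h2.symm.trans h1
  rw [pow_zero, hk] at e
  exact add_right_cancel e

lemma kpow_mul_S (hk : k ^ N = 1) (j : ℕ) :
    k ^ j * (∑ n ∈ Finset.range N, k ^ n) = ∑ n ∈ Finset.range N, k ^ n := by
  induction j with
  | zero => rw [pow_zero, one_mul]
  | succ j ih => rw [pow_succ', mul_assoc, ih, k_mul_S hk]

lemma S_mul_k (hk : k ^ N = 1) :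
    (∑ n ∈ Finset.range N, k ^ n) * k = ∑ n ∈ Finset.range N, k ^ n := by
  rw [Finset.sum_mul]
  have step : (∑ n ∈ Finset.range N, k ^ n * k) = ∑ n ∈ Finset.range N, k * k ^ n :=
    Finset.sum_congr rfl fun n _ => by rw [← pow_succ, pow_succ']
  rw [step, ← Finset.mul_sum, k_mul_S hk]

lemma S_mul_swap {x : A} {c : ℂ} (h : k * x = c • (x * k)) :
    (∑ n ∈ Finset.range N, k ^ n) * x = x * (∑ n ∈ Finset.range N, c ^ n • k ^ n) := by
  rw [Finset.sum_mul, Finset.mul_sum]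
  refine Finset.sum_congr rfl fun n _ => ?_
  rw [mul_smul_comm, swap_pow h n]

lemma k_mul_T (hk : k ^ N = 1) {c : ℂ} (hc : c ≠ 0) (hcN : c ^ N = 1) :
    k * (∑ n ∈ Finset.range N, c ^ n • k ^ n)
      = c⁻¹ • ∑ n ∈ Finset.range N, c ^ n • k ^ n := by
  rw [eq_inv_smul_iff₀ hc, Finset.mul_sum, Finset.smul_sum]
  have step : ∀ n ∈ Finset.range N, c • (k * c ^ n • k ^ n) = c ^ (n + 1) • k ^ (n + 1) := by
    intro n _
    rw [mul_smul_comm, smul_smul, ← pow_succ', ← pow_succ']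
  rw [Finset.sum_congr rfl step]
  have h1 := Finset.sum_range_succ (fun n => c ^ n • k ^ n) N
  have h2 := Finset.sum_range_succ' (fun n => c ^ n • k ^ n) N
  have e := h2.symm.trans h1
  simp only [pow_zero, one_smul, hk, hcN] at e
  exact add_right_cancel e

lemma kpow_mul_T (hk : k ^ N = 1) {c : ℂ} (hc : c ≠ 0) (hcN : c ^ N = 1) (j : ℕ) :
    k ^ j * (∑ n ∈ Finset.range N, c ^ n • k ^ n)
      = (c⁻¹) ^ j • ∑ n ∈ Finset.range N, c ^ n • k ^ n := by
  induction j with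
  | zero => rw [pow_zero, pow_zero, one_mul, one_smul]
  | succ j ih =>
      rw [pow_succ', mul_assoc, ih, mul_smul_comm, k_mul_T hk hc hcN, smul_smul, ← pow_succ]

end Group



end QGAux

end CointegralAux

/-- `Λ` is a two-sided cointegral: `x·Λ = Λ·x = ε(x)·Λ`. -/
theorem cointegral_property (pp pm : ℕ) (hpp : 2 ≤ pp) (hpm : 2 ≤ pm)
    (hco : Nat.Coprime pp pm) :
    gen pp pm K * cointegral pp pm = cointegral pp pm ∧
    cointegral pp pm * gen pp pm K = cointegral pp pm ∧
    gen pp pm Ep * cointegral pp pm = 0 ∧ cointegral pp pm * gen pp pm Ep = 0 ∧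
    gen pp pm Fp * cointegral pp pm = 0 ∧ cointegral pp pm * gen pp pm Fp = 0 ∧
    gen pp pm Em * cointegral pp pm = 0 ∧ cointegral pp pm * gen pp pm Em = 0 ∧
    gen pp pm Fm * cointegral pp pm = 0 ∧ cointegral pp pm * gen pp pm Fm = 0 ∧
    ∀ ε : QG pp pm →ₐ[ℂ] ℂ,
      ε (gen pp pm K) = 1 → ε (gen pp pm Ep) = 0 → ε (gen pp pm Fp) = 0 →
      ε (gen pp pm Em) = 0 → ε (gen pp pm Fm) = 0 →
      ∀ x : QG pp pm,
        x * cointegral pp pm = ε x • cointegral pp pm ∧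
        cointegral pp pm * x = ε x • cointegral pp pm := by
  classical
  have hpp0 : pp ≠ 0 := by omega
  have hpm0 : pm ≠ 0 := by omega
  have hNpm : pm ≤ 2 * pp * pm := by nlinarith
  have hNpp : pp ≤ 2 * pp * pm := by nlinarith
  -- scalar facts
  have hq0 : rootOfUnity pp ≠ 0 := QGAux.root_ne_zero pp
  have hr0 : rootOfUnity pm ≠ 0 := QGAux.root_ne_zero pm
  have hq20 : rootOfUnity pp ^ 2 ≠ 0 := pow_ne_zero _ hq0
  have hr20 : rootOfUnity pm ^ 2 ≠ 0 := pow_ne_zero _ hr0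
  have hq2pp : (rootOfUnity pp ^ 2) ^ pp = 1 := by
    rw [← pow_mul, QGAux.root_pow_two_mul_self hpp0]
  have hr2pm : (rootOfUnity pm ^ 2) ^ pm = 1 := by
    rw [← pow_mul, QGAux.root_pow_two_mul_self hpm0]
  have hq2N : (rootOfUnity pp ^ 2) ^ (2 * pp * pm) = 1 := by
    rw [show 2 * pp * pm = pp * (2 * pm) by ring, pow_mul, hq2pp, one_pow]
  have hr2N : (rootOfUnity pm ^ 2) ^ (2 * pp * pm) = 1 := by
    rw [show 2 * pp * pm = pm * (2 * pp) by ring, pow_mul, hr2pm, one_pow]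
  have split : ∀ (x : ℂ) (m : ℕ), m ≤ 2 * pp * pm → x ^ (2 * pp * pm) = 1 →
      x ^ (2 * pp * pm - m) * x ^ m = 1 := by
    intro x m hm h1
    rw [← pow_add, Nat.sub_add_cancel hm, h1]
  -- u₊ = (q²)^pm
  have hup0 : (rootOfUnity pp ^ 2) ^ pm ≠ 0 := pow_ne_zero _ hq20
  have hupP : ((rootOfUnity pp ^ 2) ^ pm) ^ pp = 1 := by
    rw [← pow_mul, mul_comm pm pp, pow_mul, hq2pp, one_pow]
  have keyP : (rootOfUnity pp ^ 2) ^ (2 * pp * pm - pm) = ((rootOfUnity pp ^ 2) ^ pm)⁻¹ :=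
    eq_inv_of_mul_eq_one_left (split _ pm hNpm hq2N)
  have hum0 : (rootOfUnity pm ^ 2) ^ pp ≠ 0 := pow_ne_zero _ hr20
  have humP : ((rootOfUnity pm ^ 2) ^ pp) ^ pm = 1 := by
    rw [← pow_mul, mul_comm pp pm, pow_mul, hr2pm, one_pow]
  have keyM : (rootOfUnity pm ^ 2) ^ (2 * pp * pm - pp) = ((rootOfUnity pm ^ 2) ^ pp)⁻¹ :=
    eq_inv_of_mul_eq_one_left (split _ pp hNpp hr2N)
  -- "trivial scalar" facts
  have triv_q_pp : (rootOfUnity pp ^ 2) ^ pp = 1 := hq2pp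
  have triv_q_Npp : (rootOfUnity pp ^ 2) ^ (2 * pp * pm - pp) = 1 := by
    have h := split (rootOfUnity pp ^ 2) pp hNpp hq2N
    rwa [hq2pp, mul_one] at h
  have triv_r_pm : (rootOfUnity pm ^ 2) ^ pm = 1 := hr2pm
  have triv_r_Npm : (rootOfUnity pm ^ 2) ^ (2 * pp * pm - pm) = 1 := by
    have h := split (rootOfUnity pm ^ 2) pm hNpm hr2N
    rwa [hr2pm, mul_one] at h
  -- relations in the quotient
  have rEp : gen pp pm Ep ^ pp = 0 := by
    simpa [gen] using RingQuot.mkAlgHom_rel ℂ (QGRel.EpNil (pp := pp) (pm := pm))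
  have rFp : gen pp pm Fp ^ pp = 0 := by
    simpa [gen] using RingQuot.mkAlgHom_rel ℂ (QGRel.FpNil (pp := pp) (pm := pm))
  have rEm : gen pp pm Em ^ pm = 0 := by
    simpa [gen] using RingQuot.mkAlgHom_rel ℂ (QGRel.EmNil (pp := pp) (pm := pm))
  have rFm : gen pp pm Fm ^ pm = 0 := by
    simpa [gen] using RingQuot.mkAlgHom_rel ℂ (QGRel.FmNil (pp := pp) (pm := pm))
  have rK : gen pp pm K ^ (2 * pp * pm) = 1 := by
    simpa [gen] using RingQuot.mkAlgHom_rel ℂ (QGRel.KOrd (pp := pp) (pm := pm))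
  have rKEp : gen pp pm K * gen pp pm Ep
      = (rootOfUnity pp ^ 2) • (gen pp pm Ep * gen pp pm K) := by
    have h := RingQuot.mkAlgHom_rel ℂ (QGRel.KEp (pp := pp) (pm := pm))
    simp only [map_mul, AlgHom.commutes] at h
    rw [Algebra.smul_def]
    exact h
  have rKFp : gen pp pm K * gen pp pm Fp
      = (rootOfUnity pp ^ 2)⁻¹ • (gen pp pm Fp * gen pp pm K) := by
    have h := RingQuot.mkAlgHom_rel ℂ (QGRel.KFp (pp := pp) (pm := pm))
    simp only [map_mul, AlgHom.commutes] at h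
    rw [Algebra.smul_def]
    exact h
  have rKEm : gen pp pm K * gen pp pm Em
      = (rootOfUnity pm ^ 2) • (gen pp pm Em * gen pp pm K) := by
    have h := RingQuot.mkAlgHom_rel ℂ (QGRel.KEm (pp := pp) (pm := pm))
    simp only [map_mul, AlgHom.commutes] at h
    rw [Algebra.smul_def]
    exact h
  have rKFm : gen pp pm K * gen pp pm Fm
      = (rootOfUnity pm ^ 2)⁻¹ • (gen pp pm Fm * gen pp pm K) := by
    have h := RingQuot.mkAlgHom_rel ℂ (QGRel.KFm (pp := pp) (pm := pm))
    simp only [map_mul, AlgHom.commutes] at h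
    rw [Algebra.smul_def]
    exact h
  have rEpEm : gen pp pm Ep * gen pp pm Em = gen pp pm Em * gen pp pm Ep := by
    simpa [gen] using RingQuot.mkAlgHom_rel ℂ (QGRel.EpEm (pp := pp) (pm := pm))
  have rFpFm : gen pp pm Fp * gen pp pm Fm = gen pp pm Fm * gen pp pm Fp := by
    simpa [gen] using RingQuot.mkAlgHom_rel ℂ (QGRel.FpFm (pp := pp) (pm := pm))
  have rEpFm : gen pp pm Ep * gen pp pm Fm = gen pp pm Fm * gen pp pm Ep := by
    simpa [gen] using RingQuot.mkAlgHom_rel ℂ (QGRel.EpFm (pp := pp) (pm := pm))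
  have rEmFp : gen pp pm Em * gen pp pm Fp = gen pp pm Fp * gen pp pm Em := by
    simpa [gen] using RingQuot.mkAlgHom_rel ℂ (QGRel.EmFp (pp := pp) (pm := pm))
  have rEpFp : gen pp pm Ep * gen pp pm Fp = gen pp pm Fp * gen pp pm Ep
      + (((rootOfUnity pp) ^ pm - ((rootOfUnity pp) ^ pm)⁻¹)⁻¹) • gen pp pm K ^ pm
      - (((rootOfUnity pp) ^ pm - ((rootOfUnity pp) ^ pm)⁻¹)⁻¹) •
          gen pp pm K ^ (2 * pp * pm - pm) := by
    have h := RingQuot.mkAlgHom_rel ℂ (QGRel.EpFp (pp := pp) (pm := pm))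
    simp only [map_mul, map_sub, map_pow, AlgHom.commutes] at h
    rw [← Algebra.smul_def, sub_eq_iff_eq_add] at h
    simp only [gen]
    rw [h, smul_sub]
    abel
  have rEmFm : gen pp pm Em * gen pp pm Fm = gen pp pm Fm * gen pp pm Em
      + (((rootOfUnity pm) ^ pp - ((rootOfUnity pm) ^ pp)⁻¹)⁻¹) • gen pp pm K ^ pp
      - (((rootOfUnity pm) ^ pp - ((rootOfUnity pm) ^ pp)⁻¹)⁻¹) •
          gen pp pm K ^ (2 * pp * pm - pp) := by
    have h := RingQuot.mkAlgHom_rel ℂ (QGRel.EmFm (pp := pp) (pm := pm))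
    simp only [map_mul, map_sub, map_pow, AlgHom.commutes] at h
    rw [← Algebra.smul_def, sub_eq_iff_eq_add] at h
    simp only [gen]
    rw [h, smul_sub]
    abel
  -- sector hypotheses, plus sector
  have h1p : gen pp pm K ^ pm * gen pp pm Ep
      = ((rootOfUnity pp ^ 2) ^ pm) • (gen pp pm Ep * gen pp pm K ^ pm) :=
    QGAux.swap_pow rKEp pm
  have h2p : gen pp pm K ^ pm * gen pp pm Fp
      = ((rootOfUnity pp ^ 2) ^ pm)⁻¹ • (gen pp pm Fp * gen pp pm K ^ pm) := by
    have h := QGAux.swap_pow rKFp pm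
    rwa [inv_pow] at h
  have h3p : gen pp pm K ^ (2 * pp * pm - pm) * gen pp pm Ep
      = ((rootOfUnity pp ^ 2) ^ pm)⁻¹ •
        (gen pp pm Ep * gen pp pm K ^ (2 * pp * pm - pm)) := by
    have h := QGAux.swap_pow rKEp (2 * pp * pm - pm)
    rwa [keyP] at h
  have h4p : gen pp pm K ^ (2 * pp * pm - pm) * gen pp pm Fp
      = ((rootOfUnity pp ^ 2) ^ pm) •
        (gen pp pm Fp * gen pp pm K ^ (2 * pp * pm - pm)) := by
    have h := QGAux.swap_pow rKFp (2 * pp * pm - pm)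
    rwa [inv_pow, keyP, inv_inv] at h
  -- sector hypotheses, minus sector
  have h1m : gen pp pm K ^ pp * gen pp pm Em
      = ((rootOfUnity pm ^ 2) ^ pp) • (gen pp pm Em * gen pp pm K ^ pp) :=
    QGAux.swap_pow rKEm pp
  have h2m : gen pp pm K ^ pp * gen pp pm Fm
      = ((rootOfUnity pm ^ 2) ^ pp)⁻¹ • (gen pp pm Fm * gen pp pm K ^ pp) := by
    have h := QGAux.swap_pow rKFm pp
    rwa [inv_pow] at h
  have h3m : gen pp pm K ^ (2 * pp * pm - pp) * gen pp pm Em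
      = ((rootOfUnity pm ^ 2) ^ pp)⁻¹ •
        (gen pp pm Em * gen pp pm K ^ (2 * pp * pm - pp)) := by
    have h := QGAux.swap_pow rKEm (2 * pp * pm - pp)
    rwa [keyM] at h
  have h4m : gen pp pm K ^ (2 * pp * pm - pp) * gen pp pm Fm
      = ((rootOfUnity pm ^ 2) ^ pp) •
        (gen pp pm Fm * gen pp pm K ^ (2 * pp * pm - pp)) := by
    have h := QGAux.swap_pow rKFm (2 * pp * pm - pp)
    rwa [inv_pow, keyM, inv_inv] at h
  -- commutation of k-powers with the other sector
  have central : ∀ (c : ℂ) (x : QG pp pm) (m : ℕ), gen pp pm K * x = c • (x * gen pp pm K) →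
      c ^ m = 1 → gen pp pm K ^ m * x = x * gen pp pm K ^ m := by
    intro c x m h h1
    have := QGAux.swap_pow h m
    rwa [h1, one_smul] at this
  have cPmEm : gen pp pm K ^ pm * gen pp pm Em = gen pp pm Em * gen pp pm K ^ pm :=
    central _ _ _ rKEm triv_r_pm
  have cPmFm : gen pp pm K ^ pm * gen pp pm Fm = gen pp pm Fm * gen pp pm K ^ pm :=
    central _ _ _ rKFm (by rw [inv_pow, triv_r_pm, inv_one])
  have cNpmEm : gen pp pm K ^ (2 * pp * pm - pm) * gen pp pm Em
      = gen pp pm Em * gen pp pm K ^ (2 * pp * pm - pm) :=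
    central _ _ _ rKEm triv_r_Npm
  have cNpmFm : gen pp pm K ^ (2 * pp * pm - pm) * gen pp pm Fm
      = gen pp pm Fm * gen pp pm K ^ (2 * pp * pm - pm) :=
    central _ _ _ rKFm (by rw [inv_pow, triv_r_Npm, inv_one])
  -- abbreviation lemmas about Λ
  have hco : cointegral pp pm = gen pp pm Fp ^ (pp - 1) * (gen pp pm Ep ^ (pp - 1) *
      (gen pp pm Fm ^ (pm - 1) * (gen pp pm Em ^ (pm - 1) *
        (∑ n ∈ Finset.range (2 * pp * pm), gen pp pm K ^ n)))) := by
    simp only [cointegral, mul_assoc]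
  have swapin : ∀ (x y X : QG pp pm), x * y = y * x → x * (y * X) = y * (x * X) := by
    intro x y X h
    rw [← mul_assoc, h, mul_assoc]
  have move : ∀ (c : ℂ) (x X : QG pp pm), gen pp pm K * x = c • (x * gen pp pm K) →
      gen pp pm K * (x * X) = c • (x * (gen pp pm K * X)) := by
    intro c x X h
    rw [← mul_assoc, h, smul_mul_assoc, mul_assoc]
  have hcoMul : ∀ x : QG pp pm, cointegral pp pm * x = gen pp pm Fp ^ (pp - 1) *
      (gen pp pm Ep ^ (pp - 1) * (gen pp pm Fm ^ (pm - 1) * (gen pp pm Em ^ (pm - 1) *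
        ((∑ n ∈ Finset.range (2 * pp * pm), gen pp pm K ^ n) * x)))) := by
    intro x
    rw [hco]
    simp only [mul_assoc]
  -- the ten statements
  have itemKL : gen pp pm K * cointegral pp pm = cointegral pp pm := by
    rw [hco, move _ _ _ (QGAux.swap_pow' rKFp (pp - 1)),
      move _ _ _ (QGAux.swap_pow' rKEp (pp - 1)),
      move _ _ _ (QGAux.swap_pow' rKFm (pm - 1)),
      move _ _ _ (QGAux.swap_pow' rKEm (pm - 1)),
      QGAux.k_mul_S rK]
    simp only [mul_smul_comm, smul_smul]
    have hone : (rootOfUnity pp ^ 2)⁻¹ ^ (pp - 1) * ((rootOfUnity pp ^ 2) ^ (pp - 1) *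
        ((rootOfUnity pm ^ 2)⁻¹ ^ (pm - 1) * (rootOfUnity pm ^ 2) ^ (pm - 1))) = 1 := by
      rw [inv_pow, inv_pow]
      field_simp
    rw [hone, one_smul]
  have itemKR : cointegral pp pm * gen pp pm K = cointegral pp pm := by
    rw [hcoMul, QGAux.S_mul_k rK, ← hco]
  have itemEpL : gen pp pm Ep * cointegral pp pm = 0 := by
    rw [hco]
    refine QGAux.sector_kill_left hpp hup0 hupP h1p h2p h3p h4p rEpFp rEp ?_
    rw [swapin _ _ _ (QGAux.comm_mul_pow cPmFm (pm - 1)),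
      swapin _ _ _ (QGAux.comm_mul_pow cPmEm (pm - 1)),
      swapin _ _ _ (QGAux.comm_mul_pow cNpmFm (pm - 1)),
      swapin _ _ _ (QGAux.comm_mul_pow cNpmEm (pm - 1)),
      QGAux.kpow_mul_S rK pm, QGAux.kpow_mul_S rK (2 * pp * pm - pm)]
  have itemEpR : cointegral pp pm * gen pp pm Ep = 0 := by
    rw [hcoMul, QGAux.S_mul_swap rKEp,
      swapin _ _ _ (QGAux.comm_mul_pow rEpEm (pm - 1)).symm,
      swapin _ _ _ (QGAux.comm_mul_pow rEpFm (pm - 1)).symm,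
      ← mul_assoc (gen pp pm Ep ^ (pp - 1)), ← pow_succ,
      show pp - 1 + 1 = pp by omega, rEp, zero_mul, mul_zero]
  have itemFpL : gen pp pm Fp * cointegral pp pm = 0 := by
    rw [hco, ← mul_assoc, ← pow_succ', show pp - 1 + 1 = pp by omega, rFp, zero_mul]
  have itemFpR : cointegral pp pm * gen pp pm Fp = 0 := by
    rw [hcoMul, QGAux.S_mul_swap rKFp,
      swapin _ _ _ (QGAux.comm_mul_pow rEmFp.symm (pm - 1)).symm,
      swapin _ _ _ (QGAux.comm_mul_pow rFpFm (pm - 1)).symm,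
      ← mul_assoc (gen pp pm Ep ^ (pp - 1)) (gen pp pm Fp)]
    refine QGAux.sector_kill_right hpp hup0 hupP h1p h3p rEpFp rFp ?_ ?_
    · rw [swapin _ _ _ (QGAux.comm_mul_pow cPmFm (pm - 1)),
        swapin _ _ _ (QGAux.comm_mul_pow cPmEm (pm - 1)),
        QGAux.kpow_mul_T rK (inv_ne_zero hq20)
          (by rw [inv_pow, hq2N, inv_one]) pm, inv_inv,
        mul_smul_comm, mul_smul_comm]
    · rw [swapin _ _ _ (QGAux.comm_mul_pow cNpmFm (pm - 1)),
        swapin _ _ _ (QGAux.comm_mul_pow cNpmEm (pm - 1)),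
        QGAux.kpow_mul_T rK (inv_ne_zero hq20)
          (by rw [inv_pow, hq2N, inv_one]) (2 * pp * pm - pm), inv_inv, keyP,
        mul_smul_comm, mul_smul_comm]
  have itemEmL : gen pp pm Em * cointegral pp pm = 0 := by
    rw [hco, swapin _ _ _ (QGAux.comm_mul_pow rEmFp (pp - 1)),
      swapin _ _ _ (QGAux.comm_mul_pow rEpEm.symm (pp - 1))]
    have inner : gen pp pm Em * (gen pp pm Fm ^ (pm - 1) * (gen pp pm Em ^ (pm - 1) *
        (∑ n ∈ Finset.range (2 * pp * pm), gen pp pm K ^ n))) = 0 := by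
      refine QGAux.sector_kill_left hpm hum0 humP h1m h2m h3m h4m rEmFm rEm ?_
      rw [QGAux.kpow_mul_S rK pp, QGAux.kpow_mul_S rK (2 * pp * pm - pp)]
    rw [inner, mul_zero, mul_zero]
  have itemEmR : cointegral pp pm * gen pp pm Em = 0 := by
    rw [hcoMul, QGAux.S_mul_swap rKEm, ← mul_assoc (gen pp pm Em ^ (pm - 1)), ← pow_succ,
      show pm - 1 + 1 = pm by omega, rEm, zero_mul, mul_zero, mul_zero, mul_zero]
  have itemFmL : gen pp pm Fm * cointegral pp pm = 0 := by
    rw [hco, swapin _ _ _ (QGAux.comm_mul_pow rFpFm.symm (pp - 1)),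
      swapin _ _ _ (QGAux.comm_mul_pow rEpFm.symm (pp - 1)),
      ← mul_assoc (gen pp pm Fm) (gen pp pm Fm ^ (pm - 1)), ← pow_succ',
      show pm - 1 + 1 = pm by omega, rFm, zero_mul, mul_zero, mul_zero]
  have itemFmR : cointegral pp pm * gen pp pm Fm = 0 := by
    rw [hcoMul, QGAux.S_mul_swap rKFm, ← mul_assoc (gen pp pm Em ^ (pm - 1)) (gen pp pm Fm)]
    have inner : gen pp pm Fm ^ (pm - 1) * ((gen pp pm Em ^ (pm - 1) * gen pp pm Fm) *
        (∑ n ∈ Finset.range (2 * pp * pm), ((rootOfUnity pm ^ 2)⁻¹) ^ n • gen pp pm K ^ n))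
        = 0 := by
      refine QGAux.sector_kill_right hpm hum0 humP h1m h3m rEmFm rFm ?_ ?_
      · rw [QGAux.kpow_mul_T rK (inv_ne_zero hr20)
          (by rw [inv_pow, hr2N, inv_one]) pp, inv_inv]
      · rw [QGAux.kpow_mul_T rK (inv_ne_zero hr20)
          (by rw [inv_pow, hr2N, inv_one]) (2 * pp * pm - pp), inv_inv, keyM]
    rw [inner, mul_zero, mul_zero]
  refine ⟨itemKL, itemKR, itemEpL, itemEpR, itemFpL, itemFpR, itemEmL, itemEmR,
    itemFmL, itemFmR, ?_⟩
  intro ε hK1 hEp0 hFp0 hEm0 hFm0 x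
  obtain ⟨y, rfl⟩ := RingQuot.mkAlgHom_surjective ℂ (QGRel pp pm) x
  induction y using FreeAlgebra.induction with
  | grade0 r =>
      constructor
      · rw [AlgHom.commutes, AlgHom.commutes]
        simp [Algebra.smul_def]
      · rw [AlgHom.commutes, AlgHom.commutes]
        simp only [Algebra.algebraMap_self, RingHom.id_apply]
        rw [← Algebra.commutes, Algebra.smul_def]
  | grade1 g =>
      cases g with
      | Ep =>
          constructor
          · show gen pp pm Ep * cointegral pp pm = ε (gen pp pm Ep) • cointegral pp pm
            rw [itemEpL, hEp0, zero_smul]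
          · show cointegral pp pm * gen pp pm Ep = ε (gen pp pm Ep) • cointegral pp pm
            rw [itemEpR, hEp0, zero_smul]
      | Fp =>
          constructor
          · show gen pp pm Fp * cointegral pp pm = ε (gen pp pm Fp) • cointegral pp pm
            rw [itemFpL, hFp0, zero_smul]
          · show cointegral pp pm * gen pp pm Fp = ε (gen pp pm Fp) • cointegral pp pm
            rw [itemFpR, hFp0, zero_smul]
      | Em =>
          constructor
          · show gen pp pm Em * cointegral pp pm = ε (gen pp pm Em) • cointegral pp pm
            rw [itemEmL, hEm0, zero_smul]
          · show cointegral pp pm * gen pp pm Em = ε (gen pp pm Em) • cointegral pp pm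
            rw [itemEmR, hEm0, zero_smul]
      | Fm =>
          constructor
          · show gen pp pm Fm * cointegral pp pm = ε (gen pp pm Fm) • cointegral pp pm
            rw [itemFmL, hFm0, zero_smul]
          · show cointegral pp pm * gen pp pm Fm = ε (gen pp pm Fm) • cointegral pp pm
            rw [itemFmR, hFm0, zero_smul]
      | K =>
          constructor
          · show gen pp pm K * cointegral pp pm = ε (gen pp pm K) • cointegral pp pm
            rw [itemKL, hK1, one_smul]
          · show cointegral pp pm * gen pp pm K = ε (gen pp pm K) • cointegral pp pm
            rw [itemKR, hK1, one_smul]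
  | mul a b ha hb =>
      simp only [map_mul]
      constructor
      · rw [mul_assoc, hb.1, mul_smul_comm, ha.1, smul_smul,
          mul_comm (ε (RingQuot.mkAlgHom ℂ (QGRel pp pm) b))]
      · rw [← mul_assoc, ha.2, smul_mul_assoc, hb.2, smul_smul]
  | add a b ha hb =>
      simp only [map_add]
      constructor
      · rw [add_mul, ha.1, hb.1, ← add_smul]
      · rw [mul_add, ha.2, hb.2, ← add_smul]
end
end
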